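/- arXiv:1905.07468 — 9 statements merged into one kernel-verified Lean document; each statement's English description precedes it below -/
import Mathlib

section
/- Let X be a finite set, let y be a real-valued function on the subsets of X, and let r ≥ 0 be an integer. If the level-r moment matrix M_r(y) is positive semidefinite, y_∅ = 1, and I ⊆ X is a set with |I| ≤ r and y_I = 1, then y_{I∪J} = y_J for every J ⊆ X with |J| ≤ r. -/
/-!
If columns `i` and `j` of a positive semidefinite matrix agree in rows `i` and `j`, then
`eᵢ - eⱼ` is isotropic for the quadratic form, hence lies in the kernel, so the two columns
agree everywhere. For the moment matrix take `i = ∅` and `j = I`: all four entries are `1`.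
-/

open Matrix
open scoped ComplexOrder

theorem Matrix.PosSemidef.col_eq_col_of_apply_eq {n 𝕜 : Type*} [Fintype n] [DecidableEq n]
    [RCLike 𝕜] {A : Matrix n n 𝕜} (hA : A.PosSemidef) {i j : n}
    (hi : A i i = A i j) (hj : A j i = A j j) (k : n) : A k i = A k j := by
  set x : n → 𝕜 := Pi.single i 1 - Pi.single j 1
  have hAx : A *ᵥ x = fun k => A k i - A k j := by
    ext k
    simp [x, mulVec_sub]
  have hxAx : star x ⬝ᵥ A *ᵥ x = 0 := by
    rw [hAx]
    simp [x, sub_dotProduct, hi, hj]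
  simpa [hAx, sub_eq_zero] using congrFun ((hA.dotProduct_mulVec_zero_iff x).mp hxAx) k

/-- For a finite set `X`, `y : Finset X → ℝ` and `r ≥ 0`, if the level-`r`
moment matrix `M_r(y) = (y_{I ∪ J})_{|I|,|J| ≤ r}` is positive semidefinite, `y ∅ = 1`,
`|I| ≤ r` and `y I = 1`, then `y (I ∪ J) = y J` for every `J` with `|J| ≤ r`. -/
theorem moment_matrix_entry_one {X : Type*} [Fintype X] [DecidableEq X]
    (y : Finset X → ℝ) (r : ℕ)
    (hM : (Matrix.of fun I J : {S : Finset X // S.card ≤ r} => y (I.1 ∪ J.1)).PosSemidef)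
    (hempty : y ∅ = 1)
    (I : Finset X) (hI : I.card ≤ r) (hyI : y I = 1) :
    ∀ J : Finset X, J.card ≤ r → y (I ∪ J) = y J := by
  intro J hJ
  have hcol := hM.col_eq_col_of_apply_eq (i := ⟨∅, by simp⟩) (j := ⟨I, hI⟩)
    (by simp [hempty, hyI]) (by simp [hyI]) ⟨J, hJ⟩
  simpa [Finset.union_comm, eq_comm] using hcol
end

section
/- Let X be a finite set, let y be a real-valued function on the subsets of X, and let r ≥ 0 be an integer. If the level-r moment matrix M_r(y) is positive semidefinite and I ⊆ X is a set with |I| ≤ r and y_I = 0, then y_{I∪J} = 0 for every J ⊆ X with |J| ≤ r. -/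
/-- For a finite set `X`, `y : Finset X → ℝ` and `r ≥ 0`, if the level-`r`
moment matrix `M_r(y) = (y_{I ∪ J})_{|I|,|J| ≤ r}` is positive semidefinite, `|I| ≤ r` and
`y I = 0`, then `y (I ∪ J) = 0` for every `J` with `|J| ≤ r`. -/
theorem moment_matrix_entry_zero {X : Type*} [Fintype X] [DecidableEq X]
    (y : Finset X → ℝ) (r : ℕ)
    (hM : (Matrix.of fun I J : {S : Finset X // S.card ≤ r} => y (I.1 ∪ J.1)).PosSemidef)
    (I : Finset X) (hI : I.card ≤ r) (hyI : y I = 0) :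
    ∀ J : Finset X, J.card ≤ r → y (I ∪ J) = 0 := by
  intro J hJ
  set M := (Matrix.of fun I J : {S : Finset X // S.card ≤ r} => y (I.1 ∪ J.1)) with hMdef
  set i : {S : Finset X // S.card ≤ r} := ⟨I, hI⟩
  set j : {S : Finset X // S.card ≤ r} := ⟨J, hJ⟩
  set v : {S : Finset X // S.card ≤ r} → ℝ := Pi.single i 1 with hv
  have hx : dotProduct (star v) (M.mulVec v) = 0 := by
    simp [Matrix.mulVec, dotProduct, Pi.single_apply, Finset.sum_ite_eq',
      hMdef, i, v, Finset.union_self, hyI]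
  have h0 := (hM.dotProduct_mulVec_zero_iff v).mp hx
  have hj := congrFun h0 j
  have : y (J ∪ I) = 0 := by
    simpa [Matrix.mulVec, dotProduct, Pi.single_apply, Finset.sum_ite_eq',
      hMdef, i, j, v] using hj
  rwa [Finset.union_comm] at this
end

section
/- Let X be a finite set, let y be a real-valued function on the subsets of X, and let r ≥ 0 be an integer. If the level-(r+1) moment matrix M_{r+1}(y) is positive semidefinite, then for every element i ∈ X, both of the following matrices, indexed by subsets I, J ⊆ X with |I|, |J| ≤ r, are positive semidefinite: M^{i,1}(y) with (I,J) entry y_{I∪J∪{i}}, and M^{i,0}(y) with (I,J) entry y_{I∪J} − y_{I∪J∪{i}}. -/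
/-- For a finite set `X`, `y : Finset X → ℝ` and `r ≥ 0`, if the level-`(r+1)`
moment matrix `M_{r+1}(y)` is positive semidefinite, then for every `i ∈ X` the matrices
`M^{i,1}(y) = (y_{I∪J∪{i}})_{|I|,|J| ≤ r}` and `M^{i,0}(y) = (y_{I∪J} − y_{I∪J∪{i}})_{|I|,|J| ≤ r}`
are positive semidefinite. -/
theorem moment_matrix_simple_slack {X : Type*} [Fintype X] [DecidableEq X]
    (y : Finset X → ℝ) (r : ℕ)
    (hM : (Matrix.of fun I J : {S : Finset X // S.card ≤ r + 1} => y (I.1 ∪ J.1)).PosSemidef)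
    (i : X) :
    (Matrix.of fun I J : {S : Finset X // S.card ≤ r} =>
        y (insert i (I.1 ∪ J.1))).PosSemidef ∧
    (Matrix.of fun I J : {S : Finset X // S.card ≤ r} =>
        y (I.1 ∪ J.1) - y (insert i (I.1 ∪ J.1))).PosSemidef := by
  set M : Matrix {S : Finset X // S.card ≤ r + 1} {S : Finset X // S.card ≤ r + 1} ℝ :=
    Matrix.of fun I J => y (I.1 ∪ J.1) with hMdef
  -- the two lifts of an index of the small matrix into indices of the big one
  have hcard : ∀ I : {S : Finset X // S.card ≤ r}, (insert i I.1).card ≤ r + 1 :=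
    fun I => (Finset.card_insert_le _ _).trans (Nat.succ_le_succ I.2)
  set lift : {S : Finset X // S.card ≤ r} → {S : Finset X // S.card ≤ r + 1} :=
    fun I => ⟨I.1, I.2.trans (Nat.le_succ r)⟩ with hlift
  set lifti : {S : Finset X // S.card ≤ r} → {S : Finset X // S.card ≤ r + 1} :=
    fun I => ⟨insert i I.1, hcard I⟩ with hlifti
  have key : insert i (∅ : Finset X) = {i} := rfl
  constructor
  · -- M^{i,1}
    set B : Matrix {S : Finset X // S.card ≤ r} {S : Finset X // S.card ≤ r + 1} ℝ :=
      Matrix.of fun I S => if S = lifti I then (1 : ℝ) else 0 with hB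
    have hEq : (Matrix.of fun I J : {S : Finset X // S.card ≤ r} =>
        y (insert i (I.1 ∪ J.1))) = B * M * B.conjTranspose := by
      ext I J
      simp only [Matrix.mul_apply, Matrix.conjTranspose_apply, hB, hMdef, Matrix.of_apply,
        ite_mul, mul_ite, one_mul, mul_one, zero_mul, mul_zero, star_one, star_zero,
        Finset.sum_ite_eq', Finset.mem_univ, if_true]
      have : insert i I.1 ∪ insert i J.1 = insert i (I.1 ∪ J.1) := by
        rw [Finset.insert_union, Finset.union_insert, Finset.insert_idem]
      simp [hlifti, this]
    rw [hEq]
    exact hM.mul_mul_conjTranspose_same B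
  · -- M^{i,0}
    set B : Matrix {S : Finset X // S.card ≤ r} {S : Finset X // S.card ≤ r + 1} ℝ :=
      Matrix.of fun I S =>
        (if S = lift I then (1 : ℝ) else 0) - (if S = lifti I then (1 : ℝ) else 0) with hB
    have hEq : (Matrix.of fun I J : {S : Finset X // S.card ≤ r} =>
        y (I.1 ∪ J.1) - y (insert i (I.1 ∪ J.1))) = B * M * B.conjTranspose := by
      ext I J
      simp only [Matrix.mul_apply, Matrix.conjTranspose_apply, hB, hMdef, Matrix.of_apply,
        sub_mul, mul_sub, ite_mul, mul_ite, one_mul, mul_one, zero_mul, mul_zero,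
        star_sub, star_one, star_zero, Finset.sum_sub_distrib,
        Finset.sum_ite_eq', Finset.mem_univ, if_true]
      have h1 : insert i I.1 ∪ insert i J.1 = insert i (I.1 ∪ J.1) := by
        rw [Finset.insert_union, Finset.union_insert, Finset.insert_idem]
      have h2 : I.1 ∪ insert i J.1 = insert i (I.1 ∪ J.1) := Finset.union_insert _ _ _
      have h3 : insert i I.1 ∪ J.1 = insert i (I.1 ∪ J.1) := Finset.insert_union _ _ _
      simp [hlift, hlifti, h1, h2, h3]
    rw [hEq]
    exact hM.mul_mul_conjTranspose_same B
end

section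
/- Let G = (V,E) be a finite directed graph and t ≥ 1 an integer. For any x : E → ℝ with x(e) ≥ 0 for all e ∈ E, the following are equivalent: (i) for every (u,v) ∈ E and every z ∈ Z^{u,v}, ∑_{e∈E} z(e)·x(e) ≥ 1; (ii) there exist nonnegative reals f_P, one for every (u,v) ∈ E and every P ∈ P_{u,v}, such that for every (u,v) ∈ E we have ∑_{P∈P_{u,v}} f_P ≥ 1, and for every (u,v) ∈ E and every e ∈ E we have ∑_{P∈P_{u,v} : e∈P} f_P ≤ x(e). -/
/-!
For a fixed edge `(u, v)`, (i) and (ii) are the two sides of LP duality for the incidence matrix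
`A` between the stretch-`t` paths from `u` to `v` and the edges: every covering `z ≥ 0`,
`A z ≥ 1`, has cost `z ⬝ x ≥ 1` iff some packing `f ≥ 0`, `fᵀ A ≤ x`, has value `∑ f ≥ 1`.
Weak duality is the chain `∑ f ≤ f ⬝ A z = fᵀA ⬝ z ≤ x ⬝ z`. Conversely, if no packing exists,
the compact convex image of the standard simplex under `f ↦ fᵀ A` misses the closed orthant
`{w ≤ x}`; a separating hyperplane, rescaled, is a covering of cost `< 1`. The cap `z ≤ 1` in
`Z^{u,v}` is harmless: `min z 1` is still a covering and, as `x ≥ 0`, costs no more than `z`.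
-/

open Finset

/-- A directed path in the graph with edge set `E`, from `u` to `v`, given as its (nonempty)
list of edges: consecutive edges are incident, the first edge starts at `u`, the last edge ends
at `v`, and no vertex is visited twice. -/
def IsDirPath {V : Type*} [DecidableEq V] (E : Finset (V × V)) (u v : V)
    (p : List (V × V)) : Prop :=
  p ≠ [] ∧ (∀ e ∈ p, e ∈ E) ∧ Option.map Prod.fst p.head? = some u ∧
    Option.map Prod.snd p.getLast? = some v ∧
    List.Chain' (fun e f => e.2 = f.1) p ∧ (u :: p.map Prod.snd).Nodup

/-- `z ∈ Z^{u,v}`: a fractional cut against the stretch-`t` paths from `u` to `v`, i.e.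
`z : E → [0,1]` with `∑_{e ∈ P} z e ≥ 1` for every path `P ∈ 𝒫_{u,v}` (at most `t` edges). -/
def InZ {V : Type*} [DecidableEq V] (E : Finset (V × V)) (t : ℕ) (u v : V)
    (z : V × V → ℝ) : Prop :=
  (∀ e ∈ E, 0 ≤ z e ∧ z e ≤ 1) ∧
  ∀ p : List (V × V), IsDirPath E u v p → p.length ≤ t → 1 ≤ (p.map z).sum

open Matrix

namespace Matrix

variable {ι κ : Type*} [Fintype ι] [Fintype κ]

theorem one_le_dotProduct_of_packing_of_covering {A : Matrix ι κ ℝ} {f : ι → ℝ} {x z : κ → ℝ}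
    (hf : 0 ≤ f) (hf1 : 1 ≤ ∑ i, f i) (hfx : f ᵥ* A ≤ x)
    (hz : 0 ≤ z) (hAz : 1 ≤ A *ᵥ z) : 1 ≤ z ⬝ᵥ x :=
  calc 1 ≤ f ⬝ᵥ 1 := by rwa [dotProduct_one]
    _ ≤ f ⬝ᵥ (A *ᵥ z) := dotProduct_le_dotProduct_of_nonneg_left hAz hf
    _ = (f ᵥ* A) ⬝ᵥ z := dotProduct_mulVec f A z
    _ ≤ x ⬝ᵥ z := dotProduct_le_dotProduct_of_nonneg_right hfx hz
    _ = z ⬝ᵥ x := dotProduct_comm x z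

theorem exists_packing_of_forall_covering (A : Matrix ι κ ℝ) {x : κ → ℝ} (hx : 0 ≤ x)
    (H : ∀ z, 0 ≤ z → 1 ≤ A *ᵥ z → 1 ≤ z ⬝ᵥ x) :
    ∃ f, 0 ≤ f ∧ 1 ≤ ∑ i, f i ∧ f ᵥ* A ≤ x := by
  classical
  by_contra hno
  have hdisj : Disjoint (Set.Iic x) (vecMulLinear A '' stdSimplex ℝ ι) := by
    rw [Set.disjoint_right]
    rintro _ ⟨f, ⟨hf0, hf1⟩, rfl⟩ hfx
    exact hno ⟨f, hf0, hf1.ge, hfx⟩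
  obtain ⟨φ, a, b, hφa, hab, hφb⟩ := geometric_hahn_banach_closed_compact
    (convex_Iic x) isClosed_Iic ((convex_stdSimplex ℝ ι).linear_image (vecMulLinear A))
    ((isCompact_stdSimplex ℝ ι).image (vecMulLinear A).continuous_of_finiteDimensional) hdisj
  set y := (dotProductEquiv ℝ κ).symm φ
  have hφ (w : κ → ℝ) : φ w = y ⬝ᵥ w :=
    (LinearMap.congr_fun ((dotProductEquiv ℝ κ).apply_symm_apply φ.toLinearMap) w).symm
  have hyx : y ⬝ᵥ x < a := hφ x ▸ hφa x Set.self_mem_Iic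
  have hy : 0 ≤ y := by
    intro j
    by_contra! hj
    -- then `y ⬝ᵥ (x - c • eⱼ)` reaches `a` for some `c ≥ 0`, although `x - c • eⱼ ≤ x`
    set c := (a - y ⬝ᵥ x) / -y j
    have hcy : c * y j = y ⬝ᵥ x - a := by
      have : y j ≠ 0 := hj.ne
      simp only [c]; field_simp; ring
    have hc : 0 ≤ c := div_nonneg (by linarith) (by simpa using hj.le)
    have := hφa (x - c • Pi.single j 1)
      (Set.mem_Iic.2 (sub_le_self _ (smul_nonneg hc (Pi.single_nonneg.2 zero_le_one))))
    rw [hφ, dotProduct_sub, dotProduct_smul, dotProduct_single, mul_one, smul_eq_mul] at this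
    linarith
  have hrow (i : ι) : b < (A *ᵥ y) i := by
    have := hφb _ ⟨_, single_mem_stdSimplex ℝ i, rfl⟩
    rwa [hφ, vecMulLinear_apply, single_one_vecMul, dotProduct_comm] at this
  have hb : 0 < b := by linarith [dotProduct_nonneg_of_nonneg hy hx]
  have := H (b⁻¹ • y) (smul_nonneg (inv_nonneg.2 hb.le) hy) fun i => by
    rw [mulVec_smul, Pi.smul_apply, smul_eq_mul, Pi.one_apply, le_inv_mul_iff₀ hb]
    simpa using (hrow i).le
  rw [smul_dotProduct, smul_eq_mul, le_inv_mul_iff₀ hb] at this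
  linarith

theorem forall_covering_iff_exists_packing (A : Matrix ι κ ℝ) {x : κ → ℝ} (hx : 0 ≤ x) :
    (∀ z, 0 ≤ z → 1 ≤ A *ᵥ z → 1 ≤ z ⬝ᵥ x) ↔ ∃ f, 0 ≤ f ∧ 1 ≤ ∑ i, f i ∧ f ᵥ* A ≤ x :=
  ⟨exists_packing_of_forall_covering A hx, fun ⟨_, hf, hf1, hfx⟩ _ hz hAz =>
    one_le_dotProduct_of_packing_of_covering hf hf1 hfx hz hAz⟩

end Matrix

theorem List.min_sum_one_le_sum_map_min_one {l : List ℝ} (hl : ∀ a ∈ l, 0 ≤ a) :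
    min l.sum 1 ≤ (l.map (min · 1)).sum := by
  induction l with
  | nil => simp
  | cons a l ih =>
    have ha : 0 ≤ a := hl a List.mem_cons_self
    have hs : 0 ≤ l.sum := List.sum_nonneg fun b hb => hl b (List.mem_cons_of_mem a hb)
    have hmin : min (a + l.sum) 1 ≤ min a 1 + min l.sum 1 := by
      simp only [min_def]; split_ifs <;> linarith
    simpa using hmin.trans (add_le_add_right (ih fun b hb => hl b (List.mem_cons_of_mem a hb)) _)

theorem List.finite_setOf_forall_mem_length_le {α : Type*} (s : Finset α) (n : ℕ) :
    {l : List α | (∀ a ∈ l, a ∈ s) ∧ l.length ≤ n}.Finite := by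
  refine ((List.finite_length_le s n).image (List.map Subtype.val)).subset ?_
  rintro l ⟨hl, hn⟩
  lift l to List s using hl
  exact ⟨l, by simpa using hn, rfl⟩

section PathEdgeMatrix

variable {α : Type*} [DecidableEq α] (Ps : Finset (List α)) (E : Finset α)

def pathEdgeMatrix : Matrix Ps E ℝ := fun P e => if (e : α) ∈ (P : List α) then 1 else 0

theorem pathEdgeMatrix_mulVec_apply {P : Ps} (hnd : (P : List α).Nodup)
    (hE : ∀ e ∈ (P : List α), e ∈ E) (w : α → ℝ) :
    (pathEdgeMatrix Ps E *ᵥ fun e => w e) P = ((P : List α).map w).sum := by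
  have hfilter : E.filter (· ∈ (P : List α)) = (P : List α).toFinset := by
    ext e; simpa using hE e
  simp only [mulVec, dotProduct, pathEdgeMatrix, ite_mul, one_mul, zero_mul]
  rw [Finset.sum_coe_sort E (fun e => if e ∈ (P : List α) then w e else 0), ← Finset.sum_filter,
    hfilter, List.sum_toFinset _ hnd]

theorem vecMul_pathEdgeMatrix_apply (g : List α → ℝ) (e : E) :
    ((fun P : Ps => g P) ᵥ* pathEdgeMatrix Ps E) e = ∑ P ∈ Ps.filter ((e : α) ∈ ·), g P := by
  simp only [vecMul, dotProduct, pathEdgeMatrix, mul_ite, mul_one, mul_zero]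
  rw [Finset.sum_coe_sort Ps (fun P => if (e : α) ∈ P then g P else 0), Finset.sum_filter]

theorem exists_packing_iff_exists_flow (x : α → ℝ) :
    (∃ f, 0 ≤ f ∧ 1 ≤ ∑ P, f P ∧ f ᵥ* pathEdgeMatrix Ps E ≤ fun e : E => x e) ↔
    ∃ g : List α → ℝ, (∀ P, 0 ≤ g P) ∧ 1 ≤ ∑ P ∈ Ps, g P ∧
      ∀ e ∈ E, ∑ P ∈ Ps.filter (e ∈ ·), g P ≤ x e := by
  constructor
  · rintro ⟨f, hf0, hf1, hfx⟩
    set g : List α → ℝ := fun P => if h : P ∈ Ps then f ⟨P, h⟩ else 0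
    have hfg : f = fun P : Ps => g P := by ext P; simp [g]
    refine ⟨g, fun P => ?_, ?_, fun e he => ?_⟩
    · by_cases h : P ∈ Ps
      · simpa [g, h] using hf0 ⟨P, h⟩
      · simp [g, h]
    · rwa [hfg, Finset.sum_coe_sort Ps g] at hf1
    · simpa [hfg, vecMul_pathEdgeMatrix_apply] using hfx ⟨e, he⟩
  · rintro ⟨g, hg0, hg1, hgx⟩
    refine ⟨fun P => g P, fun P => hg0 P, by rwa [Finset.sum_coe_sort Ps g], fun e => ?_⟩
    simpa [vecMul_pathEdgeMatrix_apply] using hgx e e.2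

end PathEdgeMatrix

section StretchPaths

variable {V : Type*} [DecidableEq V] {E : Finset (V × V)} {u v : V} {p : List (V × V)}

theorem IsDirPath.nodup (hp : IsDirPath E u v p) : p.Nodup :=
  (List.nodup_cons.mp hp.2.2.2.2.2).2.of_map _

variable (E) (t : ℕ)

theorem finite_setOf_isDirPath_length_le (u v : V) :
    {p | IsDirPath E u v p ∧ p.length ≤ t}.Finite :=
  (List.finite_setOf_forall_mem_length_le E t).subset fun _ hp => ⟨hp.1.2.1, hp.2⟩

noncomputable def stretchPaths (u v : V) : Finset (List (V × V)) :=
  (finite_setOf_isDirPath_length_le E t u v).toFinset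

theorem mem_stretchPaths : p ∈ stretchPaths E t u v ↔ IsDirPath E u v p ∧ p.length ≤ t :=
  Set.Finite.mem_toFinset _

theorem coe_stretchPaths (u v : V) :
    (stretchPaths E t u v : Set (List (V × V))) = {p | IsDirPath E u v p ∧ p.length ≤ t} :=
  Set.Finite.coe_toFinset _

theorem coe_filter_mem_stretchPaths (u v : V) (e : V × V) :
    ((stretchPaths E t u v).filter (e ∈ ·) : Set (List (V × V))) =
      {p | IsDirPath E u v p ∧ p.length ≤ t ∧ e ∈ p} := by
  ext p
  simp [mem_stretchPaths, and_assoc]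

theorem forall_inZ_iff_forall_covering (x : V × V → ℝ) (hx : ∀ e ∈ E, 0 ≤ x e) (u v : V) :
    (∀ z, InZ E t u v z → 1 ≤ ∑ e ∈ E, z e * x e) ↔
    ∀ z : E → ℝ, 0 ≤ z → 1 ≤ pathEdgeMatrix (stretchPaths E t u v) E *ᵥ z →
      1 ≤ z ⬝ᵥ fun e : E => x e := by
  have hdot (w : V × V → ℝ) : ((fun e : E => w e) ⬝ᵥ fun e : E => x e) = ∑ e ∈ E, w e * x e :=
    Finset.sum_coe_sort E fun e => w e * x e
  have hrow (w : V × V → ℝ) (P : stretchPaths E t u v) :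
      (pathEdgeMatrix _ E *ᵥ fun e : E => w e) P = ((P : List (V × V)).map w).sum :=
    have hP := (mem_stretchPaths E t).1 P.2
    pathEdgeMatrix_mulVec_apply _ _ hP.1.nodup hP.1.2.1 w
  constructor
  · intro hcut z hz hcover
    set w : V × V → ℝ := fun e => if h : e ∈ E then z ⟨e, h⟩ else 0
    have hwz : z = fun e : E => w e := by ext e; simp [w]
    have hw0 : ∀ e ∈ E, 0 ≤ w e := fun e he => by simpa [w, he] using hz ⟨e, he⟩
    have hcapped : InZ E t u v fun e => min (w e) 1 := by
      refine ⟨fun e he => ⟨le_min (hw0 e he) zero_le_one, min_le_right _ _⟩, fun p hp hlen => ?_⟩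
      have hpw : 1 ≤ (p.map w).sum := by
        simpa [hwz, hrow] using hcover ⟨p, (mem_stretchPaths E t).2 ⟨hp, hlen⟩⟩
      have := List.min_sum_one_le_sum_map_min_one (l := p.map w)
        (List.forall_mem_map.2 fun e he => hw0 e (hp.2.1 e he))
      simpa [min_eq_right hpw, List.map_map, Function.comp_def] using this
    calc 1 ≤ ∑ e ∈ E, min (w e) 1 * x e := hcut _ hcapped
      _ ≤ ∑ e ∈ E, w e * x e :=
        sum_le_sum fun e he => mul_le_mul_of_nonneg_right (min_le_left _ _) (hx e he)
      _ = z ⬝ᵥ fun e : E => x e := by rw [hwz, hdot]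
  · rintro hcover z ⟨hz01, hzP⟩
    rw [← hdot]
    refine hcover _ (fun e => (hz01 e e.2).1) fun P => ?_
    have hP := (mem_stretchPaths E t).1 P.2
    simpa [hrow] using hzP P hP.1 hP.2

theorem forall_inZ_iff_exists_flow (x : V × V → ℝ) (hx : ∀ e ∈ E, 0 ≤ x e) (u v : V) :
    (∀ z, InZ E t u v z → 1 ≤ ∑ e ∈ E, z e * x e) ↔
    ∃ g : List (V × V) → ℝ, (∀ P, 0 ≤ g P) ∧ 1 ≤ ∑ P ∈ stretchPaths E t u v, g P ∧
      ∀ e ∈ E, ∑ P ∈ (stretchPaths E t u v).filter (e ∈ ·), g P ≤ x e :=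
  (forall_inZ_iff_forall_covering E t x hx u v).trans <|
    (forall_covering_iff_exists_packing (pathEdgeMatrix _ E) fun e => hx e e.2).trans
      -- `convert` reconciles two `Decidable` instances for membership of an edge in a path
      (by convert exists_packing_iff_exists_flow (stretchPaths E t u v) E x)

end StretchPaths

theorem lp_spanner_equiv_flow_general {V : Type*} [DecidableEq V]
    (E : Finset (V × V)) (t : ℕ)
    (x : V × V → ℝ) (hx : ∀ e ∈ E, 0 ≤ x e) :
    (∀ e ∈ E, ∀ z : V × V → ℝ, InZ E t e.1 e.2 z → 1 ≤ ∑ e' ∈ E, z e' * x e') ↔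
    (∃ f : (V × V) → List (V × V) → ℝ,
      (∀ uv P, 0 ≤ f uv P) ∧
      (∀ e ∈ E, 1 ≤ ∑ᶠ P ∈ {p : List (V × V) | IsDirPath E e.1 e.2 p ∧ p.length ≤ t},
        f e P) ∧
      (∀ e ∈ E, ∀ e' ∈ E,
        (∑ᶠ P ∈ {p : List (V × V) | IsDirPath E e.1 e.2 p ∧ p.length ≤ t ∧ e' ∈ p},
          f e P) ≤ x e')) := by
  simp only [← coe_stretchPaths, ← coe_filter_mem_stretchPaths, finsum_mem_coe_finset]
  constructor
  · intro hcut
    have hflow (e : V × V) : ∃ g : List (V × V) → ℝ, (∀ P, 0 ≤ g P) ∧ (e ∈ E →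
        1 ≤ ∑ P ∈ stretchPaths E t e.1 e.2, g P ∧
        ∀ e' ∈ E, ∑ P ∈ (stretchPaths E t e.1 e.2).filter (e' ∈ ·), g P ≤ x e') := by
      by_cases he : e ∈ E
      · obtain ⟨g, hg0, hg⟩ := (forall_inZ_iff_exists_flow E t x hx e.1 e.2).1 (hcut e he)
        exact ⟨g, hg0, fun _ => hg⟩
      · exact ⟨0, fun _ => le_rfl, fun h => absurd h he⟩
    choose f hf0 hf using hflow
    exact ⟨f, hf0, fun e he => (hf e he).1, fun e he => (hf e he).2⟩
  · rintro ⟨f, hf0, hf1, hfx⟩ e he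
    exact (forall_inZ_iff_exists_flow E t x hx e.1 e.2).2 ⟨f e, hf0 e, hf1 e he, hfx e he⟩

/-- equivalence of `LP_Spanner` and `LP_Spanner^{Flow}`.
For a finite directed graph `(V, E)`, a stretch `t ≥ 1` and `x : E → ℝ` nonnegative on `E`,
the cut constraints `∑_e z e * x e ≥ 1` (for all `(u,v) ∈ E` and `z ∈ Z^{u,v}`) hold iff
there exist nonnegative flow values `f (u,v) P` on stretch-`t` paths `P ∈ 𝒫_{u,v}` shipping at
least one unit of flow from `u` to `v` for every `(u,v) ∈ E` subject to the capacities `x`. -/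
theorem lp_spanner_equiv_flow {V : Type*} [Fintype V] [DecidableEq V]
    (E : Finset (V × V)) (t : ℕ) (ht : 1 ≤ t)
    (x : V × V → ℝ) (hx : ∀ e ∈ E, 0 ≤ x e) :
    (∀ e ∈ E, ∀ z : V × V → ℝ, InZ E t e.1 e.2 z → 1 ≤ ∑ e' ∈ E, z e' * x e') ↔
    (∃ f : (V × V) → List (V × V) → ℝ,
      (∀ uv P, 0 ≤ f uv P) ∧
      (∀ e ∈ E, 1 ≤ ∑ᶠ P ∈ {p : List (V × V) | IsDirPath E e.1 e.2 p ∧ p.length ≤ t},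
        f e P) ∧
      (∀ e ∈ E, ∀ e' ∈ E,
        (∑ᶠ P ∈ {p : List (V × V) | IsDirPath E e.1 e.2 p ∧ p.length ≤ t ∧ e' ∈ p},
          f e P) ≤ x e')) :=
  lp_spanner_equiv_flow_general E t x hx
end

section
/- Let H be a real inner product space, Σ a finite set, u ∈ H with ‖u‖² = 1, and (U_σ)_{σ∈Σ} a family of vectors in H such that ⟨U_σ, U_{σ'}⟩ = 0 whenever σ ≠ σ', ⟨U_σ, u⟩ = ‖U_σ‖² for every σ ∈ Σ, and ∑_{σ∈Σ} ‖U_σ‖² = 1. Then ∑_{σ∈Σ} U_σ = u. -/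
open scoped RealInnerProductSpace

/-- Let `H` be a real inner product space, `Sg` a finite set (the alphabet Σ),
`u ∈ H` with `‖u‖² = 1`, and `(U σ)_{σ ∈ Sg}` a family of vectors such that `⟪U σ, U σ'⟫ = 0`
for `σ ≠ σ'`, `⟪U σ, u⟫ = ‖U σ‖²` for every `σ`, and `∑ σ, ‖U σ‖² = 1`.
Then `∑ σ, U σ = u`. -/
theorem sum_label_vectors_eq {H : Type*} [NormedAddCommGroup H] [InnerProductSpace ℝ H]
    {Sg : Type*} [Fintype Sg] (u : H) (U : Sg → H)
    (hu : ‖u‖ ^ 2 = 1)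
    (horth : ∀ σ σ' : Sg, σ ≠ σ' → ⟪U σ, U σ'⟫ = 0)
    (hcons : ∀ σ : Sg, ⟪U σ, u⟫ = ‖U σ‖ ^ 2)
    (hsum : ∑ σ : Sg, ‖U σ‖ ^ 2 = 1) :
    ∑ σ : Sg, U σ = u := by
  have hS : ⟪∑ σ : Sg, U σ, ∑ σ : Sg, U σ⟫ = 1 := by
    rw [inner_sum]
    have : ∀ σ : Sg, ⟪∑ σ' : Sg, U σ', U σ⟫ = ‖U σ‖ ^ 2 := by
      intro σ
      rw [sum_inner, Finset.sum_eq_single σ]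
      · rw [real_inner_self_eq_norm_sq]
      · intro b _ hb; exact horth b σ hb
      · simp
    simp_rw [this]; exact hsum
  have hSu : ⟪∑ σ : Sg, U σ, u⟫ = 1 := by
    rw [sum_inner]; simp_rw [hcons]; exact hsum
  have h0 : ⟪(∑ σ : Sg, U σ) - u, (∑ σ : Sg, U σ) - u⟫ = 0 := by
    rw [inner_sub_sub_self, hS, hSu, real_inner_self_eq_norm_sq, hu, real_inner_comm, hSu]
    ring
  exact sub_eq_zero.mp (inner_self_eq_zero.mp h0)
end

section
/- Let y* be a feasible solution to SDP_Proj^{r+2} for a projection games instance (L, R, E_Proj, Σ, {π_{i,j}}), where r ≥ 0, let {c_i,x_j} ∈ E_Proj, and suppose that ∑_{(σL,σR)∈π_{i,j}} y*_{{(c_i,σL),(x_j,σR)}} = 1. Then for every pair (σL,σR) ∈ Σ×Σ with (σL,σR) ∉ π_{i,j} and every Ψ ⊆ (L∪R)×Σ with |Ψ| ≤ 2r, it holds that y*_{Ψ∪{(c_i,σL),(x_j,σR)}} = 0. -/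
open Finset

/-- A set of (vertex, label) pairs is *inconsistent* if it assigns two different labels to the
same vertex. -/
def Inconsistent {W Sg : Type*} (Ψ : Finset (W × Sg)) : Prop :=
  ∃ v σ σ', σ ≠ σ' ∧ (v, σ) ∈ Ψ ∧ (v, σ') ∈ Ψ

/-- Feasibility for the level-`r` Lasserre SDP for projection games (`SDP_Proj^r`) on the
vertex set `W` (`= L ⊕ R`) with alphabet `Sg`: `y ∅ = 1`, the moment matrix
`(y_{Ψ₁ ∪ Ψ₂})_{|Ψ₁|,|Ψ₂| ≤ r}` is positive semidefinite, and for every vertex `v` and all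
`Ψ₁, Ψ₂` with `|Ψ₁|, |Ψ₂| ≤ r` one has `∑_{σ} y_{Ψ₁∪Ψ₂∪{(v,σ)}} = y_{Ψ₁∪Ψ₂}`. -/
def ProjFeasible {W Sg : Type*} [Fintype W] [Fintype Sg] [DecidableEq W] [DecidableEq Sg]
    (r : ℕ) (y : Finset (W × Sg) → ℝ) : Prop :=
  y ∅ = 1 ∧
  (Matrix.of fun Ψ₁ Ψ₂ : {S : Finset (W × Sg) // S.card ≤ r} => y (Ψ₁.1 ∪ Ψ₂.1)).PosSemidef ∧
  ∀ (v : W) (Ψ₁ Ψ₂ : Finset (W × Sg)), Ψ₁.card ≤ r → Ψ₂.card ≤ r →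
    ∑ σ : Sg, y ((Ψ₁ ∪ Ψ₂) ∪ {(v, σ)}) = y (Ψ₁ ∪ Ψ₂)

/-!
The moment matrix is positive semidefinite, so every moment `y_S` with `|S| ≤ r + 2` is
nonnegative, and a vanishing diagonal entry `y_A` kills its whole row: `y_{A ∪ B} = 0` whenever
`|B| ≤ r + 2`. The consistency constraints make the pair moments of `c_i, x_j` a probability
distribution on `Σ × Σ`; if the pairs in `π_{i,j}` already carry mass `1`, every other pair
`P` has `y_P = 0`. Finally, writing `Ψ = Ψ₁ ∪ Ψ₂` with `|Ψ₁|, |Ψ₂| ≤ r`, the row property applied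
twice gives `y_{Ψ ∪ P} = y_{(Ψ₁ ∪ P) ∪ (Ψ₂ ∪ P)} = 0`.
-/

open scoped ComplexOrder in
theorem Matrix.PosSemidef.apply_eq_zero_of_diag_eq_zero {n 𝕜 : Type*} [Fintype n] [DecidableEq n]
    [RCLike 𝕜] {A : Matrix n n 𝕜} (hA : A.PosSemidef) {i : n} (hi : A i i = 0) (j : n) :
    A j i = 0 := by
  have hcol := (hA.dotProduct_mulVec_zero_iff (Pi.single i 1)).mp (by simpa using hi)
  simpa using congrFun hcol j

theorem Finset.exists_union_eq_card_le_of_card_le_two_mul {α : Type*} [DecidableEq α]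
    {s : Finset α} {r : ℕ} (hs : #s ≤ 2 * r) :
    ∃ t u : Finset α, t ∪ u = s ∧ #t ≤ r ∧ #u ≤ r := by
  obtain ⟨t, hts, ht⟩ := s.exists_subset_card_eq (min_le_left #s r)
  refine ⟨t, s \ t, union_sdiff_of_subset hts, ht ▸ min_le_right _ _, ?_⟩
  rw [card_sdiff_of_subset hts, ht]
  omega

theorem eq_zero_of_sum_sum_eq_sum_graph {α β : Type*} [Fintype α] [Fintype β] [DecidableEq β]
    {f : α → β → ℝ} (hf : ∀ a b, 0 ≤ f a b) (g : α → β)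
    (hsum : ∑ a, ∑ b, f a b = ∑ a, f a (g a)) {a : α} {b : β} (hb : b ≠ g a) : f a b = 0 := by
  have hoff : ∀ a, ∑ b ∈ univ.erase (g a), f a b = ∑ b, f a b - f a (g a) := fun a =>
    eq_sub_of_add_eq (sum_erase_add _ _ (mem_univ _))
  have hoff_nonneg : ∀ a, 0 ≤ ∑ b ∈ univ.erase (g a), f a b := fun a =>
    sum_nonneg fun b _ => hf a b
  have hoff_zero : ∑ b ∈ univ.erase (g a), f a b = 0 := by
    refine (sum_eq_zero_iff_of_nonneg fun a _ => hoff_nonneg a).mp ?_ a (mem_univ a)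
    simp only [hoff, sum_sub_distrib, hsum, sub_self]
  exact (sum_eq_zero_iff_of_nonneg fun b _ => hf a b).mp hoff_zero b (mem_erase.mpr ⟨hb, mem_univ _⟩)

namespace ProjFeasible

variable {W Sg : Type*} [Fintype W] [Fintype Sg] [DecidableEq W] [DecidableEq Sg]
  {r : ℕ} {y : Finset (W × Sg) → ℝ}

theorem nonneg (hy : ProjFeasible r y) {S : Finset (W × Sg)} (hS : #S ≤ r) : 0 ≤ y S := by
  simpa using hy.2.1.diag_nonneg (i := ⟨S, hS⟩)

theorem union_eq_zero (hy : ProjFeasible r y) {A B : Finset (W × Sg)} (hA : #A ≤ r)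
    (hB : #B ≤ r) (hA0 : y A = 0) : y (A ∪ B) = 0 := by
  rw [union_comm]
  exact hy.2.1.apply_eq_zero_of_diag_eq_zero (i := ⟨A, hA⟩) (by simpa using hA0) ⟨B, hB⟩

theorem union_eq_zero_of_card_le_two_mul {k : ℕ} (hy : ProjFeasible (r + k) y)
    {P Ψ : Finset (W × Sg)} (hP : #P ≤ k) (hP0 : y P = 0) (hΨ : #Ψ ≤ 2 * r) :
    y (Ψ ∪ P) = 0 := by
  obtain ⟨Ψ₁, Ψ₂, rfl, hΨ₁, hΨ₂⟩ := exists_union_eq_card_le_of_card_le_two_mul hΨ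
  have hcard : ∀ {Φ : Finset (W × Sg)}, #Φ ≤ r → #(Φ ∪ P) ≤ r + k := fun hΦ =>
    (card_union_le _ _).trans (by omega)
  have h₁ : y (Ψ₁ ∪ P) = 0 := by
    rw [union_comm]
    exact hy.union_eq_zero (by omega) (by omega) hP0
  calc y (Ψ₁ ∪ Ψ₂ ∪ P) = y ((Ψ₁ ∪ P) ∪ (Ψ₂ ∪ P)) := by
        rw [union_union_union_comm, union_self]
    _ = 0 := hy.union_eq_zero (hcard hΨ₁) (hcard hΨ₂) h₁

theorem sum_singleton (hy : ProjFeasible r y) (v : W) : ∑ σ, y {(v, σ)} = 1 := by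
  simpa [hy.1] using hy.2.2 v ∅ ∅ (by simp) (by simp)

theorem sum_pair (hy : ProjFeasible r y) (hr : 1 ≤ r) (u v : W) (τ : Sg) :
    ∑ σ, y {(u, τ), (v, σ)} = y {(u, τ)} := by
  simpa using hy.2.2 v {(u, τ)} ∅ (by simpa using hr) (by simp)

theorem sum_sum_pair (hy : ProjFeasible r y) (hr : 1 ≤ r) (u v : W) :
    ∑ τ, ∑ σ, y {(u, τ), (v, σ)} = 1 := by
  simp only [hy.sum_pair hr, hy.sum_singleton]

theorem pair_eq_zero_of_sum_graph_eq_one (hy : ProjFeasible r y) (hr : 2 ≤ r) {u v : W}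
    (f : Sg → Sg) (hf : ∑ τ, y {(u, τ), (v, f τ)} = 1) {τ σ : Sg} (hσ : σ ≠ f τ) :
    y {(u, τ), (v, σ)} = 0 :=
  eq_zero_of_sum_sum_eq_sum_graph (f := fun τ σ => y {(u, τ), (v, σ)})
    (fun _ _ => hy.nonneg (card_le_two.trans hr)) f
    (by rw [hy.sum_sum_pair (by omega), hf]) hσ

end ProjFeasible

theorem projection_sdp_pair_eq_zero_general
    {L R Sg : Type*} [Fintype L] [Fintype R] [Fintype Sg]
    [DecidableEq L] [DecidableEq R] [DecidableEq Sg]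
    (π : L → R → Sg → Sg)
    (r : ℕ) (ystar : Finset ((L ⊕ R) × Sg) → ℝ)
    (hfeas : ProjFeasible (r + 2) ystar)
    (ci : L) (xj : R)
    (hsat : ∑ σL : Sg, ystar {(Sum.inl ci, σL), (Sum.inr xj, π ci xj σL)} = 1)
    (σL σR : Sg) (hnot : σR ≠ π ci xj σL)
    (Ψ : Finset ((L ⊕ R) × Sg)) (hΨ : Ψ.card ≤ 2 * r) :
    ystar (Ψ ∪ {(Sum.inl ci, σL), (Sum.inr xj, σR)}) = 0 :=
  hfeas.union_eq_zero_of_card_le_two_mul card_le_two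
    (hfeas.pair_eq_zero_of_sum_graph_eq_one le_add_self _ hsat hnot) hΨ

/-- Claim `pair=0`.  Let `y*` be a feasible solution to `SDP_Proj^{r+2}` for a
projection games instance (`Eproj`, `π`), let `{c_i, x_j} ∈ E_Proj`, and suppose that
`∑_{(σL,σR) ∈ π_{i,j}} y*_{{(c_i,σL),(x_j,σR)}} = 1`.  Then for every `(σL, σR) ∉ π_{i,j}` and
every `Ψ` with `|Ψ| ≤ 2r`, `y*_{Ψ ∪ {(c_i,σL),(x_j,σR)}} = 0`. -/
theorem projection_sdp_pair_eq_zero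
    {L R Sg : Type*} [Fintype L] [Fintype R] [Fintype Sg]
    [DecidableEq L] [DecidableEq R] [DecidableEq Sg]
    (Eproj : Finset (L × R)) (π : L → R → Sg → Sg)
    (r : ℕ) (ystar : Finset ((L ⊕ R) × Sg) → ℝ)
    (hfeas : ProjFeasible (r + 2) ystar)
    (ci : L) (xj : R) (he : (ci, xj) ∈ Eproj)
    (hsat : ∑ σL : Sg, ystar {(Sum.inl ci, σL), (Sum.inr xj, π ci xj σL)} = 1)
    (σL σR : Sg) (hnot : σR ≠ π ci xj σL)
    (Ψ : Finset ((L ⊕ R) × Sg)) (hΨ : Ψ.card ≤ 2 * r) :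
    ystar (Ψ ∪ {(Sum.inl ci, σL), (Sum.inr xj, σR)}) = 0 :=
  projection_sdp_pair_eq_zero_general π r ystar hfeas ci xj hsat σL σR hnot Ψ hΨ
end

section
/- Let G = (V,E) be the directed spanner instance built from a projection games instance in which every vertex of L has degree exactly K ≥ 1, with parameter k ≥ 2, and let y' be built from a feasible solution y* to SDP_Proj^{r+2} (r ≥ 0). Then ∑_{e∈E} y'_{{e}} = (m+n)(2|Σ|−2) + m·K·|Σ|·(2k−3) + (m+n)·k·K·|Σ|, and this quantity is at most 5·|V|; in particular the objective value of y' is O(|V|). -/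
open Finset

/-- The ambient vertex type for the directed `(2k−1)`-spanner instance built from a projection
games instance with left vertices `L`, right vertices `R` and alphabet `Sg`; `D` is the number
of duplicate vertices (`D = k·K·|Σ|`) and `T` the number of internal vertices of each middle
path (`T = 2k−4`).  The five summands are: the label vertices `c_{i,σ}`, the duplicate vertices
`c_i^l`, the label vertices `x_{j,σ}`, the duplicate vertices `x_j^l`, and the middle-path
vertices `w_{i,j,σL,σR,t}`. -/
abbrev SpV (L R Sg : Type) (D T : ℕ) : Type :=
  (L × Sg) ⊕ (L × Fin D) ⊕ (R × Sg) ⊕ (R × Fin D) ⊕ (L × R × Sg × Sg × Fin T)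

namespace SpV

variable {L R Sg : Type} {D T : ℕ}

/-- The label vertex `c_{i,σ}`. -/
def cLab (i : L) (σ : Sg) : SpV L R Sg D T := Sum.inl (i, σ)

/-- The duplicate vertex `c_i^l`. -/
def cDup (i : L) (l : Fin D) : SpV L R Sg D T := Sum.inr (Sum.inl (i, l))

/-- The label vertex `x_{j,σ}`. -/
def xLab (j : R) (σ : Sg) : SpV L R Sg D T := Sum.inr (Sum.inr (Sum.inl (j, σ)))

/-- The duplicate vertex `x_j^l`. -/
def xDup (j : R) (l : Fin D) : SpV L R Sg D T :=
  Sum.inr (Sum.inr (Sum.inr (Sum.inl (j, l))))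

/-- The middle-path vertex `w_{i,j,σL,σR,t}`. -/
def mid (i : L) (j : R) (σL σR : Sg) (t : Fin T) : SpV L R Sg D T :=
  Sum.inr (Sum.inr (Sum.inr (Sum.inr (i, j, σL, σR, t))))

end SpV

set_option synthInstance.maxSize 1024 in
instance SpV.instDecidableEq {L R Sg : Type} [DecidableEq L] [DecidableEq R] [DecidableEq Sg]
    {D T : ℕ} : DecidableEq (SpV L R Sg D T) := inferInstance

instance SpV.instFintype {L R Sg : Type} [Fintype L] [Fintype R] [Fintype Sg] {D T : ℕ} :
    Fintype (SpV L R Sg D T) := inferInstance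

namespace Spanner

/-- The number `k·K·|Σ|` of duplicate vertices per projection-games vertex. -/
abbrev numDup (Sg : Type) [Fintype Sg] (k K : ℕ) : ℕ := k * K * Fintype.card Sg

/-- The vertex type of the directed spanner instance with parameters `k, K`. -/
abbrev Vt (L R Sg : Type) [Fintype Sg] (k K : ℕ) : Type :=
  SpV L R Sg (numDup Sg k K) (2 * k - 4)

/-- The edge set `E_L = {(c_i^l, c_{i,σ})}`. -/
def ELedges (L R Sg : Type) [Fintype L] [Fintype R] [Fintype Sg]
    [DecidableEq L] [DecidableEq R] [DecidableEq Sg] (k K : ℕ) :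
    Finset (Vt L R Sg k K × Vt L R Sg k K) :=
  Finset.univ.image fun p : L × Fin (numDup Sg k K) × Sg =>
    (SpV.cDup p.1 p.2.1, SpV.cLab p.1 p.2.2)

/-- The edge set `E_R = {(x_{j,σ}, x_j^l)}`. -/
def ERedges (L R Sg : Type) [Fintype L] [Fintype R] [Fintype Sg]
    [DecidableEq L] [DecidableEq R] [DecidableEq Sg] (k K : ℕ) :
    Finset (Vt L R Sg k K × Vt L R Sg k K) :=
  Finset.univ.image fun p : R × Fin (numDup Sg k K) × Sg =>
    (SpV.xLab p.1 p.2.2, SpV.xDup p.1 p.2.1)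

/-- The edge set `E_LStars = {(c_{i,1}, c_{i,σ}), (c_{i,σ}, c_{i,1}) : σ ≠ 1}`
(`σ0` plays the role of the fixed label `1 ∈ Σ`). -/
def ELStars (L R : Type) {Sg : Type} [Fintype L] [Fintype R] [Fintype Sg]
    [DecidableEq L] [DecidableEq R] [DecidableEq Sg] (σ0 : Sg) (k K : ℕ) :
    Finset (Vt L R Sg k K × Vt L R Sg k K) :=
  ((Finset.univ.filter fun p : L × Sg => p.2 ≠ σ0).image fun p =>
      (SpV.cLab p.1 σ0, SpV.cLab p.1 p.2)) ∪
  ((Finset.univ.filter fun p : L × Sg => p.2 ≠ σ0).image fun p =>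
      (SpV.cLab p.1 p.2, SpV.cLab p.1 σ0))

/-- The edge set `E_RStars = {(x_{j,1}, x_{j,σ}), (x_{j,σ}, x_{j,1}) : σ ≠ 1}`. -/
def ERStars (L R : Type) {Sg : Type} [Fintype L] [Fintype R] [Fintype Sg]
    [DecidableEq L] [DecidableEq R] [DecidableEq Sg] (σ0 : Sg) (k K : ℕ) :
    Finset (Vt L R Sg k K × Vt L R Sg k K) :=
  ((Finset.univ.filter fun p : R × Sg => p.2 ≠ σ0).image fun p =>
      (SpV.xLab p.1 σ0, SpV.xLab p.1 p.2)) ∪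
  ((Finset.univ.filter fun p : R × Sg => p.2 ≠ σ0).image fun p =>
      (SpV.xLab p.1 p.2, SpV.xLab p.1 σ0))

/-- The edge set `E_Outer = {(c_i^l, x_j^l) : {c_i, x_j} ∈ E_Proj, l ∈ [kK|Σ|]}`. -/
def EOuter {L R : Type} (Sg : Type) [Fintype L] [Fintype R] [Fintype Sg]
    [DecidableEq L] [DecidableEq R] [DecidableEq Sg]
    (Eproj : Finset (L × R)) (k K : ℕ) :
    Finset (Vt L R Sg k K × Vt L R Sg k K) :=
  (Eproj ×ˢ (Finset.univ : Finset (Fin (numDup Sg k K)))).image fun p =>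
    (SpV.cDup p.1.1 p.2, SpV.xDup p.1.2 p.2)

/-- The vertex sequence `c_{i,σL}, w_{i,j,σL,σR,1}, …, w_{i,j,σL,σR,2k−4}, x_{j,σR}` of the
middle path (for `k = 2` it is just `c_{i,σL}, x_{j,σR}`). -/
def midVerts {L R Sg : Type} [Fintype Sg] (k K : ℕ) (i : L) (j : R) (σL σR : Sg) :
    List (Vt L R Sg k K) :=
  (SpV.cLab i σL :: (List.finRange (2 * k - 4)).map fun t => SpV.mid i j σL σR t) ++
    [SpV.xLab j σR]

/-- The list of consecutive edges of a vertex sequence. -/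
def pathEdges {V : Type*} (vs : List V) : List (V × V) := vs.zip vs.tail

/-- The edge list `E_M^{i,j,σL,σR}` of the middle path from `c_{i,σL}` to `x_{j,σR}`. -/
def EMpath {L R Sg : Type} [Fintype Sg] (k K : ℕ) (i : L) (j : R) (σL σR : Sg) :
    List (Vt L R Sg k K × Vt L R Sg k K) :=
  pathEdges (midVerts k K i j σL σR)

/-- The edge set `E_M = ⋃_{ {c_i,x_j} ∈ E_Proj, (σL,σR) ∈ π_{i,j} } E_M^{i,j,σL,σR}`. -/
def EMedges {L R Sg : Type} [Fintype L] [Fintype R] [Fintype Sg]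
    [DecidableEq L] [DecidableEq R] [DecidableEq Sg]
    (Eproj : Finset (L × R)) (π : L → R → Sg → Sg) (k K : ℕ) :
    Finset (Vt L R Sg k K × Vt L R Sg k K) :=
  Eproj.biUnion fun e => (Finset.univ : Finset Sg).biUnion fun σL =>
    (EMpath k K e.1 e.2 σL (π e.1 e.2 σL)).toFinset

/-- The edge set `E = E_L ∪ E_LStars ∪ E_M ∪ E_RStars ∪ E_R ∪ E_Outer` of the directed
spanner instance. -/
def Edges {L R Sg : Type} [Fintype L] [Fintype R] [Fintype Sg]
    [DecidableEq L] [DecidableEq R] [DecidableEq Sg]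
    (Eproj : Finset (L × R)) (π : L → R → Sg → Sg) (σ0 : Sg) (k K : ℕ) :
    Finset (Vt L R Sg k K × Vt L R Sg k K) :=
  ELedges L R Sg k K ∪ ELStars L R σ0 k K ∪ EMedges Eproj π k K ∪
    ERStars L R σ0 k K ∪ ERedges L R Sg k K ∪ EOuter Sg Eproj k K

/-- The vertex set `V = L_Labels ∪ L_Dups ∪ R_Labels ∪ R_Dups ∪ M_Paths` of the directed
spanner instance. -/
def Verts {L R Sg : Type} [Fintype L] [Fintype R] [Fintype Sg]
    [DecidableEq L] [DecidableEq R] [DecidableEq Sg]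
    (Eproj : Finset (L × R)) (π : L → R → Sg → Sg) (k K : ℕ) :
    Finset (Vt L R Sg k K) :=
  (Finset.univ.image fun p : L × Sg => SpV.cLab p.1 p.2) ∪
  (Finset.univ.image fun p : L × Fin (numDup Sg k K) => SpV.cDup p.1 p.2) ∪
  (Finset.univ.image fun p : R × Sg => SpV.xLab p.1 p.2) ∪
  (Finset.univ.image fun p : R × Fin (numDup Sg k K) => SpV.xDup p.1 p.2) ∪
  (Eproj.biUnion fun e => (Finset.univ : Finset Sg).biUnion fun σL =>
    Finset.univ.image fun t : Fin (2 * k - 4) =>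
      SpV.mid e.1 e.2 σL (π e.1 e.2 σL) t)

/-- The map `Φ` sending an edge of `E ∖ E_Outer` to the corresponding label set:
`Φ((c_i^l, c_{i,σ})) = {(c_i, σ)}`, `Φ((x_{j,σ}, x_j^l)) = {(x_j, σ)}`, and `Φ(e) = ∅` for
`e ∈ E_LStars ∪ E_M ∪ E_RStars`. -/
def Phi {L R Sg : Type} [Fintype Sg] {k K : ℕ}
    (e : Vt L R Sg k K × Vt L R Sg k K) : Finset ((L ⊕ R) × Sg) :=
  match e with
  | (Sum.inr (Sum.inl _), Sum.inl (i, σ)) => {(Sum.inl i, σ)}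
  | (Sum.inr (Sum.inr (Sum.inl (j, σ))), Sum.inr (Sum.inr (Sum.inr (Sum.inl _)))) =>
      {(Sum.inr j, σ)}
  | _ => ∅

/-- The fractional solution `y'` built from a solution `y*` of the projection games SDP:
`y'_S = 0` if `S` contains an edge of `E_Outer`, and `y'_S = y*_{Φ(S)}` otherwise
(where `Φ(S) = ⋃_{e ∈ S} Φ(e)`). -/
def yPrime {L R Sg : Type} [Fintype L] [Fintype R] [Fintype Sg]
    [DecidableEq L] [DecidableEq R] [DecidableEq Sg]
    (Eproj : Finset (L × R)) (k K : ℕ) (ystar : Finset ((L ⊕ R) × Sg) → ℝ)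
    (S : Finset (Vt L R Sg k K × Vt L R Sg k K)) : ℝ :=
  if (S ∩ EOuter Sg Eproj k K).Nonempty then 0 else ystar (S.biUnion Phi)

end Spanner

/-!
Under `y'` an outer edge has weight `0`, a star or middle-path edge has weight `y*(∅) = 1`, and
the `|Σ|` edges at a duplicate vertex `c_i^l` (or `x_j^l`) have weights `y*({(c_i, σ)})`, which
sum to `1` by the marginal constraint of the SDP. So the objective is the number of star and
middle-path edges plus the number of duplicate vertices. Edges (and vertices) of different
parts of the construction have different kinds of endpoints, so each part is counted
separately, and comparing with `|V| = (m+n)|Σ| + (m+n)kK|Σ| + mK|Σ|(2k−4)` gives the bound.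
-/

theorem Finset.disjoint_of_mapsTo {α β : Type*} {f : α → β} {s t : Finset α}
    {s' t' : Finset β} (hs : ∀ a ∈ s, f a ∈ s') (ht : ∀ a ∈ t, f a ∈ t') (h : Disjoint s' t') :
    Disjoint s t :=
  disjoint_left.2 fun a has hat => disjoint_left.1 h (hs a has) (ht a hat)

theorem Finset.mapsTo_union {α β : Type*} [DecidableEq α] [DecidableEq β] {f : α → β}
    {s t : Finset α} {s' t' : Finset β} (hs : ∀ a ∈ s, f a ∈ s') (ht : ∀ a ∈ t, f a ∈ t') :
    ∀ a ∈ s ∪ t, f a ∈ s' ∪ t' := by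
  simp only [mem_union]
  exact fun a => Or.imp (hs a) (ht a)

theorem ProjFeasible.sum_singleton_s8 {W Sg : Type*} [Fintype W] [Fintype Sg] [DecidableEq W]
    [DecidableEq Sg] {r : ℕ} {y : Finset (W × Sg) → ℝ} (hy : ProjFeasible r y) (v : W) :
    ∑ σ : Sg, y {(v, σ)} = 1 := by
  simpa [hy.1] using hy.2.2 v ∅ ∅ (by simp) (by simp)

theorem Finset.card_eq_mul_of_card_filter_fst {α β : Type*} [Fintype α] [DecidableEq α]
    {s : Finset (α × β)} {K : ℕ} (h : ∀ a, (s.filter fun p => p.1 = a).card = K) :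
    s.card = Fintype.card α * K := by
  rw [card_eq_sum_card_fiberwise (f := Prod.fst) (t := univ) fun _ _ => mem_univ _]
  simp [h, card_univ]

theorem Finset.card_filter_snd_ne {X S : Type*} [Fintype X] [Fintype S] [DecidableEq S]
    (s₀ : S) :
    (univ.filter fun p : X × S => p.2 ≠ s₀).card = Fintype.card X * (Fintype.card S - 1) := by
  have h : (univ.filter fun p : X × S => p.2 ≠ s₀) = univ ×ˢ univ.erase s₀ := by
    ext p
    simp
  rw [h, card_product, card_erase_of_mem (mem_univ _), card_univ, card_univ]

theorem card_bidirectedStars {X S V : Type*} [Fintype X] [Fintype S] [DecidableEq S]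
    [DecidableEq V] {c : X → S → V} (hc : Function.Injective2 c) (s₀ : S) :
    (((univ.filter fun p : X × S => p.2 ≠ s₀).image fun p => (c p.1 s₀, c p.1 p.2)) ∪
      ((univ.filter fun p : X × S => p.2 ≠ s₀).image fun p => (c p.1 p.2, c p.1 s₀))).card =
      Fintype.card X * (Fintype.card S - 1) * 2 := by
  have hdisj :
      Disjoint ((univ.filter fun p : X × S => p.2 ≠ s₀).image fun p => (c p.1 s₀, c p.1 p.2))
        ((univ.filter fun p : X × S => p.2 ≠ s₀).image fun p => (c p.1 p.2, c p.1 s₀)) := by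
    simp only [disjoint_left, mem_image, mem_filter, mem_univ, true_and]
    rintro _ ⟨p, -, rfl⟩ ⟨q, hq, h⟩
    exact hq (hc (congrArg Prod.fst h)).2
  rw [card_union_of_disjoint hdisj,
    card_image_of_injective _ fun p q h => Prod.ext_iff.2 (hc (congrArg Prod.snd h)),
    card_image_of_injective _ fun p q h => Prod.ext_iff.2 (hc (congrArg Prod.fst h)),
    card_filter_snd_ne]
  ring

namespace SpV

variable {L R Sg : Type} {D T : ℕ}

/-- The parts of the spanner's vertex and edge sets are told apart by the kinds of the
(end)vertices. -/
def kind : SpV L R Sg D T → ℕ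
  | Sum.inl _ => 0
  | Sum.inr (Sum.inl _) => 1
  | Sum.inr (Sum.inr (Sum.inl _)) => 2
  | Sum.inr (Sum.inr (Sum.inr (Sum.inl _))) => 3
  | Sum.inr (Sum.inr (Sum.inr (Sum.inr _))) => 4

@[simp] lemma kind_cLab (i : L) (σ : Sg) : kind (cLab i σ : SpV L R Sg D T) = 0 := rfl
@[simp] lemma kind_cDup (i : L) (l : Fin D) : kind (cDup i l : SpV L R Sg D T) = 1 := rfl
@[simp] lemma kind_xLab (j : R) (σ : Sg) : kind (xLab j σ : SpV L R Sg D T) = 2 := rfl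
@[simp] lemma kind_xDup (j : R) (l : Fin D) : kind (xDup j l : SpV L R Sg D T) = 3 := rfl
@[simp] lemma kind_mid (i : L) (j : R) (σL σR : Sg) (t : Fin T) :
    kind (mid i j σL σR t : SpV L R Sg D T) = 4 := rfl

lemma cLab_injective2 : Function.Injective2 (cLab : L → Sg → SpV L R Sg D T) :=
  fun _ _ _ _ h => by simpa [cLab] using h

lemma xLab_injective2 : Function.Injective2 (xLab : R → Sg → SpV L R Sg D T) :=
  fun _ _ _ _ h => by simpa [xLab] using h

def edgeKind (e : SpV L R Sg D T × SpV L R Sg D T) : ℕ × ℕ := (kind e.1, kind e.2)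

end SpV

namespace Spanner

open SpV

lemma mem_pathEdges {V : Type*} {vs : List V} {u v : V} (h : (u, v) ∈ pathEdges vs) :
    u ∈ vs.dropLast ∧ v ∈ vs.tail := by
  induction vs with
  | nil => simp [pathEdges] at h
  | cons a vs ih =>
    cases vs with
    | nil => simp [pathEdges] at h
    | cons b vs =>
      rcases List.mem_cons.1 h with h | h
      · simp_all
      · obtain ⟨hu, hv⟩ := ih h
        exact ⟨List.mem_cons_of_mem _ hu, List.mem_of_mem_tail hv⟩

lemma length_pathEdges {V : Type*} (vs : List V) : (pathEdges vs).length = vs.length - 1 := by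
  simp [pathEdges]

lemma nodup_pathEdges {V : Type*} {vs : List V} (h : vs.tail.Nodup) : (pathEdges vs).Nodup := by
  have h_snd : (pathEdges vs).map Prod.snd = vs.tail :=
    List.map_snd_zip (by rw [List.length_tail]; omega)
  exact (h_snd ▸ h).of_map Prod.snd

variable {L R Sg : Type} [Fintype Sg] {k K : ℕ}

lemma mem_EMpath {i : L} {j : R} {σL σR : Sg} {u v : Vt L R Sg k K}
    (h : (u, v) ∈ EMpath k K i j σL σR) :
    (u = cLab i σL ∨ ∃ t, mid i j σL σR t = u) ∧
      ((∃ t, mid i j σL σR t = v) ∨ v = xLab j σR) := by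
  obtain ⟨hu, hv⟩ := mem_pathEdges h
  rw [midVerts, List.dropLast_concat] at hu
  rw [midVerts, List.cons_append, List.tail_cons] at hv
  simp only [List.mem_cons, List.mem_append, List.mem_map, List.mem_finRange, true_and,
    List.not_mem_nil, or_false] at hu hv
  exact ⟨hu, hv⟩

lemma edgeKind_of_mem_EMpath {i : L} {j : R} {σL σR : Sg}
    {e : Vt L R Sg k K × Vt L R Sg k K} (h : e ∈ EMpath k K i j σL σR) :
    edgeKind e ∈ ({0, 4} ×ˢ {4, 2} : Finset (ℕ × ℕ)) := by
  obtain ⟨u, v⟩ := e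
  obtain ⟨hu, hv⟩ := mem_EMpath h
  rcases hu with rfl | ⟨t, rfl⟩ <;> rcases hv with ⟨t', rfl⟩ | rfl <;> simp [edgeKind]

lemma eq_of_mem_EMpath {i i' : L} {j j' : R} {σL σL' σR σR' : Sg}
    {e : Vt L R Sg k K × Vt L R Sg k K} (h : e ∈ EMpath k K i j σL σR)
    (h' : e ∈ EMpath k K i' j' σL' σR') :
    i = i' ∧ j = j' ∧ σL = σL' := by
  obtain ⟨u, v⟩ := e
  obtain ⟨hu, hv⟩ := mem_EMpath h
  obtain ⟨hu', hv'⟩ := mem_EMpath h'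
  rcases hu with rfl | ⟨t, rfl⟩ <;> rcases hv with ⟨s, rfl⟩ | rfl <;>
    rcases hu' with hu' | ⟨t', hu'⟩ <;> rcases hv' with ⟨s', hv'⟩ | hv' <;>
    simp_all [cLab, mid, xLab]

lemma length_EMpath (hk : 2 ≤ k) (i : L) (j : R) (σL σR : Sg) :
    (EMpath k K i j σL σR).length = 2 * k - 3 := by
  rw [EMpath, length_pathEdges]
  simp only [midVerts, List.length_append, List.length_cons, List.length_map,
    List.length_finRange, List.length_nil]
  omega

lemma nodup_EMpath (i : L) (j : R) (σL σR : Sg) : (EMpath k K i j σL σR).Nodup := by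
  refine nodup_pathEdges ?_
  rw [midVerts, List.cons_append, List.tail_cons]
  refine ((List.nodup_finRange _).map fun t t' h => ?_).append (List.nodup_singleton _) ?_
  · simpa [mid] using h
  · simp [mid, xLab]

lemma Phi_eq_empty {e : Vt L R Sg k K × Vt L R Sg k K}
    (h : edgeKind e ∉ ({(1, 0), (2, 3)} : Finset (ℕ × ℕ))) : Phi e = ∅ := by
  obtain ⟨u, v⟩ := e
  rcases u with _ | _ | _ | _ | _ <;> rcases v with _ | _ | _ | _ | _ <;>
    first | rfl | simp [edgeKind, kind] at h

variable [DecidableEq L] [DecidableEq R] [DecidableEq Sg] {Eproj : Finset (L × R)}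
  {π : L → R → Sg → Sg}

lemma card_midVerts :
    (Eproj.biUnion fun e => (univ : Finset Sg).biUnion fun σL =>
      univ.image fun t : Fin (2 * k - 4) =>
        (mid e.1 e.2 σL (π e.1 e.2 σL) t : Vt L R Sg k K)).card =
      Eproj.card * (Fintype.card Sg * (2 * k - 4)) := by
  rw [card_biUnion, sum_const_nat fun p _ => ?_]
  · rw [card_biUnion, sum_const_nat fun σL _ => ?_, card_univ]
    · rw [card_image_of_injective _ fun t t' h => by simpa [mid] using h, card_univ,
        Fintype.card_fin]
    · intro σL _ σL' _ hσ
      simp only [Function.onFun, disjoint_left, mem_image, mem_univ, true_and]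
      rintro _ ⟨t, rfl⟩ ⟨t', h⟩
      exact hσ (by simp_all [mid])
  · intro p _ q _ hpq
    simp only [Function.onFun, disjoint_left, mem_biUnion, mem_image, mem_univ, true_and]
    rintro _ ⟨σL, t, rfl⟩ ⟨σL', t', h⟩
    exact hpq (by simp_all [mid, Prod.ext_iff])

variable [Fintype L] [Fintype R] {σ0 : Sg}

lemma mapsTo_edgeKind_ELedges :
    ∀ e ∈ ELedges L R Sg k K, edgeKind e ∈ ({(1, 0)} : Finset (ℕ × ℕ)) := by
  intro e he
  obtain ⟨p, -, rfl⟩ := mem_image.1 he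
  simp [edgeKind]

lemma mapsTo_edgeKind_ELStars :
    ∀ e ∈ ELStars L R σ0 k K, edgeKind e ∈ ({(0, 0)} : Finset (ℕ × ℕ)) := by
  intro e he
  rcases mem_union.1 he with he | he <;> obtain ⟨p, -, rfl⟩ := mem_image.1 he <;> simp [edgeKind]

lemma mapsTo_edgeKind_EMedges :
    ∀ e ∈ EMedges Eproj π k K, edgeKind e ∈ ({0, 4} ×ˢ {4, 2} : Finset (ℕ × ℕ)) := by
  intro e he
  simp only [EMedges, mem_biUnion, mem_univ, true_and, List.mem_toFinset] at he
  obtain ⟨p, -, σL, he⟩ := he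
  exact edgeKind_of_mem_EMpath he

lemma mapsTo_edgeKind_ERStars :
    ∀ e ∈ ERStars L R σ0 k K, edgeKind e ∈ ({(2, 2)} : Finset (ℕ × ℕ)) := by
  intro e he
  rcases mem_union.1 he with he | he <;> obtain ⟨p, -, rfl⟩ := mem_image.1 he <;> simp [edgeKind]

lemma mapsTo_edgeKind_ERedges :
    ∀ e ∈ ERedges L R Sg k K, edgeKind e ∈ ({(2, 3)} : Finset (ℕ × ℕ)) := by
  intro e he
  obtain ⟨p, -, rfl⟩ := mem_image.1 he
  simp [edgeKind]

lemma mapsTo_edgeKind_EOuter :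
    ∀ e ∈ EOuter Sg Eproj k K, edgeKind e ∈ ({(1, 3)} : Finset (ℕ × ℕ)) := by
  intro e he
  obtain ⟨p, -, rfl⟩ := mem_image.1 he
  simp [edgeKind]

lemma notMem_EOuter {e : Vt L R Sg k K × Vt L R Sg k K} (h : edgeKind e ≠ (1, 3)) :
    e ∉ EOuter Sg Eproj k K :=
  fun he => h (mem_singleton.1 (mapsTo_edgeKind_EOuter e he))

variable (ystar : Finset ((L ⊕ R) × Sg) → ℝ)

lemma yPrime_singleton (e : Vt L R Sg k K × Vt L R Sg k K) :
    yPrime Eproj k K ystar {e} = if e ∈ EOuter Sg Eproj k K then 0 else ystar (Phi e) := by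
  by_cases h : e ∈ EOuter Sg Eproj k K
  · simp [yPrime, h, singleton_inter_of_mem]
  · simp [yPrime, h, singleton_inter_of_notMem, singleton_biUnion]

lemma yPrime_singleton_eq_one (hone : ystar ∅ = 1) {e : Vt L R Sg k K × Vt L R Sg k K}
    (h : edgeKind e ∉ ({(1, 0), (2, 3), (1, 3)} : Finset (ℕ × ℕ))) :
    yPrime Eproj k K ystar {e} = 1 := by
  rw [yPrime_singleton, if_neg (notMem_EOuter fun h' => h (by simp [h'])),
    Phi_eq_empty fun h' => h (by simp_all), hone]

lemma sum_yPrime_eq_card (hone : ystar ∅ = 1) {X : Finset (Vt L R Sg k K × Vt L R Sg k K)}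
    {S : Finset (ℕ × ℕ)} (hX : ∀ e ∈ X, edgeKind e ∈ S)
    (hS : Disjoint S {(1, 0), (2, 3), (1, 3)}) :
    ∑ e ∈ X, yPrime Eproj k K ystar {e} = X.card := by
  rw [sum_congr rfl fun e he => yPrime_singleton_eq_one ystar hone
    (disjoint_left.1 hS (hX e he)), sum_const, nsmul_one]

lemma sum_yPrime_ELedges (hy : ∀ v, ∑ σ : Sg, ystar {(v, σ)} = 1) :
    ∑ e ∈ ELedges L R Sg k K, yPrime Eproj k K ystar {e} =
      (Fintype.card L : ℝ) * numDup Sg k K := by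
  have hval (p : L × Fin (numDup Sg k K) × Sg) :
      yPrime Eproj k K ystar {(cDup p.1 p.2.1, cLab p.1 p.2.2)} =
        ystar {(Sum.inl p.1, p.2.2)} := by
    rw [yPrime_singleton, if_neg (notMem_EOuter (by simp [edgeKind]))]
    rfl
  rw [ELedges, sum_image fun p _ q _ h => by simp [cDup, cLab, Prod.ext_iff] at h ⊢; tauto]
  simp [hval, Fintype.sum_prod_type, hy]

lemma sum_yPrime_ERedges (hy : ∀ v, ∑ σ : Sg, ystar {(v, σ)} = 1) :
    ∑ e ∈ ERedges L R Sg k K, yPrime Eproj k K ystar {e} =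
      (Fintype.card R : ℝ) * numDup Sg k K := by
  have hval (p : R × Fin (numDup Sg k K) × Sg) :
      yPrime Eproj k K ystar {(xLab p.1 p.2.2, xDup p.1 p.2.1)} =
        ystar {(Sum.inr p.1, p.2.2)} := by
    rw [yPrime_singleton, if_neg (notMem_EOuter (by simp [edgeKind]))]
    rfl
  rw [ERedges, sum_image fun p _ q _ h => by simp [xDup, xLab, Prod.ext_iff] at h ⊢; tauto]
  simp [hval, Fintype.sum_prod_type, hy]

lemma sum_yPrime_EOuter : ∑ e ∈ EOuter Sg Eproj k K, yPrime Eproj k K ystar {e} = 0 :=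
  sum_eq_zero fun e he => by rw [yPrime_singleton, if_pos he]

lemma card_ELStars : (ELStars L R σ0 k K).card = Fintype.card L * (Fintype.card Sg - 1) * 2 :=
  card_bidirectedStars cLab_injective2 σ0

lemma card_ERStars : (ERStars L R σ0 k K).card = Fintype.card R * (Fintype.card Sg - 1) * 2 :=
  card_bidirectedStars xLab_injective2 σ0

lemma card_EMedges (hk : 2 ≤ k) :
    (EMedges Eproj π k K).card = Eproj.card * (Fintype.card Sg * (2 * k - 3)) := by
  have hpath (p : L × R) (σL : Sg) :
      (EMpath k K p.1 p.2 σL (π p.1 p.2 σL)).toFinset.card = 2 * k - 3 := by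
    rw [List.toFinset_card_of_nodup (nodup_EMpath _ _ _ _), length_EMpath hk]
  rw [EMedges, card_biUnion, sum_const_nat fun p _ => ?_]
  · rw [card_biUnion, sum_const_nat fun σL _ => hpath p σL, card_univ]
    intro σL _ σL' _ hσ
    simp only [Function.onFun, disjoint_left, List.mem_toFinset]
    exact fun e he he' => hσ (eq_of_mem_EMpath he he').2.2
  · intro p _ q _ hpq
    simp only [Function.onFun, disjoint_left, mem_biUnion, mem_univ, true_and, List.mem_toFinset]
    rintro e ⟨σL, he⟩ ⟨σL', he'⟩
    obtain ⟨hi, hj, -⟩ := eq_of_mem_EMpath he he'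
    exact hpq (Prod.ext hi hj)

lemma sum_yPrime_Edges (hk : 2 ≤ k) (hone : ystar ∅ = 1)
    (hy : ∀ v, ∑ σ : Sg, ystar {(v, σ)} = 1) :
    ∑ e ∈ Edges Eproj π σ0 k K, yPrime Eproj k K ystar {e} =
      (Fintype.card L : ℝ) * numDup Sg k K + (Fintype.card L * (Fintype.card Sg - 1) * 2 : ℕ) +
        (Eproj.card * (Fintype.card Sg * (2 * k - 3)) : ℕ) +
        (Fintype.card R * (Fintype.card Sg - 1) * 2 : ℕ) +
        (Fintype.card R : ℝ) * numDup Sg k K := by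
  have hL := mapsTo_edgeKind_ELedges (L := L) (R := R) (Sg := Sg) (k := k) (K := K)
  have hLS := mapsTo_edgeKind_ELStars (L := L) (R := R) (σ0 := σ0) (k := k) (K := K)
  have hM := mapsTo_edgeKind_EMedges (Eproj := Eproj) (π := π) (k := k) (K := K)
  have hRS := mapsTo_edgeKind_ERStars (L := L) (R := R) (σ0 := σ0) (k := k) (K := K)
  have hR := mapsTo_edgeKind_ERedges (L := L) (R := R) (Sg := Sg) (k := k) (K := K)
  have h₂ := mapsTo_union hL hLS
  have h₃ := mapsTo_union h₂ hM
  have h₄ := mapsTo_union h₃ hRS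
  have h₅ := mapsTo_union h₄ hR
  rw [Edges, sum_union (disjoint_of_mapsTo h₅ mapsTo_edgeKind_EOuter (by decide)),
    sum_union (disjoint_of_mapsTo h₄ hR (by decide)),
    sum_union (disjoint_of_mapsTo h₃ hRS (by decide)),
    sum_union (disjoint_of_mapsTo h₂ hM (by decide)),
    sum_union (disjoint_of_mapsTo hL hLS (by decide)),
    sum_yPrime_ELedges ystar hy, sum_yPrime_eq_card ystar hone hLS (by decide), card_ELStars,
    sum_yPrime_eq_card ystar hone hM (by decide), card_EMedges hk,
    sum_yPrime_eq_card ystar hone hRS (by decide), card_ERStars,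
    sum_yPrime_ERedges ystar hy, sum_yPrime_EOuter, add_zero]

lemma card_Verts :
    (Verts Eproj π k K).card =
      Fintype.card L * Fintype.card Sg + Fintype.card L * numDup Sg k K +
        Fintype.card R * Fintype.card Sg + Fintype.card R * numDup Sg k K +
        Eproj.card * (Fintype.card Sg * (2 * k - 4)) := by
  rw [Verts, card_union_of_disjoint, card_union_of_disjoint, card_union_of_disjoint,
    card_union_of_disjoint, card_midVerts,
    card_image_of_injective _ fun p q h => by simpa [cLab, Prod.ext_iff] using h,
    card_image_of_injective _ fun p q h => by simpa [cDup, Prod.ext_iff] using h,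
    card_image_of_injective _ fun p q h => by simpa [xLab, Prod.ext_iff] using h,
    card_image_of_injective _ fun p q h => by simpa [xDup, Prod.ext_iff] using h]
  all_goals simp [disjoint_left, cLab, cDup, xLab, xDup, mid]

lemma objective_le_five_mul_card {m n s k K : ℕ} (hk : 2 ≤ k) :
    m * (k * K * s) + m * (s - 1) * 2 + m * K * (s * (2 * k - 3)) + n * (s - 1) * 2 +
        n * (k * K * s) ≤
      5 * (m * s + m * (k * K * s) + n * s + n * (k * K * s) + m * K * (s * (2 * k - 4))) := by
  obtain ⟨j, rfl⟩ := Nat.exists_eq_add_of_le' hk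
  rw [show 2 * (j + 2) - 3 = 2 * j + 1 by omega, show 2 * (j + 2) - 4 = 2 * j by omega]
  have hs : s - 1 ≤ s := Nat.sub_le s 1
  generalize s - 1 = t at hs ⊢
  linarith [Nat.mul_le_mul_left m hs, Nat.mul_le_mul_left n hs, Nat.zero_le (m * K * s * j),
    Nat.zero_le (n * K * s * j), Nat.zero_le (m * K * s), Nat.zero_le (n * K * s),
    Nat.zero_le (m * s), Nat.zero_le (n * s)]

end Spanner

theorem directed_spanner_fractional_objective_general
    {L R Sg : Type} [Fintype L] [Fintype R] [Fintype Sg]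
    [DecidableEq L] [DecidableEq R] [DecidableEq Sg]
    (Eproj : Finset (L × R)) (π : L → R → Sg → Sg) (σ0 : Sg) (k K : ℕ)
    (hk : 2 ≤ k)
    (hdeg : ∀ i : L, (Eproj.filter fun e => e.1 = i).card = K)
    (r : ℕ) (ystar : Finset ((L ⊕ R) × Sg) → ℝ)
    (hfeas : ProjFeasible (r + 2) ystar) :
    (∑ e ∈ Spanner.Edges Eproj π σ0 k K, Spanner.yPrime Eproj k K ystar {e}) =
        ((Fintype.card L : ℝ) + Fintype.card R) * (2 * Fintype.card Sg - 2) +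
        (Fintype.card L : ℝ) * K * Fintype.card Sg * (2 * k - 3) +
        ((Fintype.card L : ℝ) + Fintype.card R) * k * K * Fintype.card Sg ∧
    (∑ e ∈ Spanner.Edges Eproj π σ0 k K, Spanner.yPrime Eproj k K ystar {e}) ≤
        5 * ((Spanner.Verts Eproj π k K).card : ℝ) := by
  have hs : 1 ≤ Fintype.card Sg := Fintype.card_pos_iff.2 ⟨σ0⟩
  rw [Spanner.sum_yPrime_Edges ystar hk hfeas.1 hfeas.sum_singleton_s8, Spanner.card_Verts,
    card_eq_mul_of_card_filter_fst hdeg]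
  constructor
  · push_cast [Nat.cast_sub hs, Nat.cast_sub (by omega : 3 ≤ 2 * k)]
    ring
  · exact_mod_cast Spanner.objective_le_five_mul_card hk

/-- Lemma `directObj`.  For the directed spanner instance `G = (V,E)` built
(with parameters `k ≥ 2`, `K ≥ 1`) from a projection games instance in which every left vertex
has degree exactly `K`, and the fractional solution `y'` built from a feasible solution `y*`
of `SDP_Proj^{r+2}`, the objective value `∑_{e ∈ E} y'_{{e}}` equals
`(m+n)(2|Σ|−2) + m·K·|Σ|·(2k−3) + (m+n)·k·K·|Σ|`, and this quantity is at most `5·|V|`. -/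
theorem directed_spanner_fractional_objective
    {L R Sg : Type} [Fintype L] [Fintype R] [Fintype Sg]
    [DecidableEq L] [DecidableEq R] [DecidableEq Sg]
    (Eproj : Finset (L × R)) (π : L → R → Sg → Sg) (σ0 : Sg) (k K : ℕ)
    (hk : 2 ≤ k) (hK : 1 ≤ K)
    (hdeg : ∀ i : L, (Eproj.filter fun e => e.1 = i).card = K)
    (r : ℕ) (ystar : Finset ((L ⊕ R) × Sg) → ℝ)
    (hfeas : ProjFeasible (r + 2) ystar) :
    (∑ e ∈ Spanner.Edges Eproj π σ0 k K, Spanner.yPrime Eproj k K ystar {e}) =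
        ((Fintype.card L : ℝ) + Fintype.card R) * (2 * Fintype.card Sg - 2) +
        (Fintype.card L : ℝ) * K * Fintype.card Sg * (2 * k - 3) +
        ((Fintype.card L : ℝ) + Fintype.card R) * k * K * Fintype.card Sg ∧
    (∑ e ∈ Spanner.Edges Eproj π σ0 k K, Spanner.yPrime Eproj k K ystar {e}) ≤
        5 * ((Spanner.Verts Eproj π k K).card : ℝ) :=
  directed_spanner_fractional_objective_general Eproj π σ0 k K hk hdeg r ystar hfeas
end

section
/- Let G = (V,E) be the directed spanner instance built from a projection games instance in which every vertex of L has degree exactly K ≥ 1, with parameter k ≥ 2, let y* be a feasible solution to SDP_Proj^{r+2} (r ≥ 0), and let y' be built from y*. Then for every edge (u,v) ∈ E_LStars ∪ E_M ∪ E_RStars and every z ∈ Z^{u,v} with respect to stretch t = 2k−1, the slack moment matrix with (I,J) entry ∑_{e∈E} z(e)·y'_{I∪J∪{e}} − y'_{I∪J}, indexed by subsets I, J ⊆ E with |I|, |J| ≤ r, is positive semidefinite. -/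
open Finset

/-- A `t`-spanner of the directed graph with edge set `E`: a subset `S ⊆ E` such that every
edge `(u,v) ∈ E` is spanned by a directed path from `u` to `v` of at most `t` edges,
all belonging to `S`. -/
def IsSpanner {V : Type*} [DecidableEq V] (E S : Finset (V × V)) (t : ℕ) : Prop :=
  S ⊆ E ∧ ∀ e ∈ E, ∃ p : List (V × V), IsDirPath S e.1 e.2 p ∧ p.length ≤ t

/-- The moment matrix `(y_{I ∪ J})`, indexed by the subsets `I, J ⊆ E` with `|I|, |J| ≤ r`. -/
def momentMatrixE {α : Type*} [Fintype α] [DecidableEq α] (E : Finset α) (r : ℕ)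
    (y : Finset α → ℝ) :
    Matrix {S : Finset α // S ⊆ E ∧ S.card ≤ r} {S : Finset α // S ⊆ E ∧ S.card ≤ r} ℝ :=
  Matrix.of fun I J => y (I.1 ∪ J.1)

/-- The slack moment matrix `(∑_{e ∈ E} z e · y_{I∪J∪{e}} − y_{I∪J})`, indexed by the subsets
`I, J ⊆ E` with `|I|, |J| ≤ r`. -/
def slackMatrixE {α : Type*} [Fintype α] [DecidableEq α] (E : Finset α) (r : ℕ)
    (y : Finset α → ℝ) (z : α → ℝ) :
    Matrix {S : Finset α // S ⊆ E ∧ S.card ≤ r} {S : Finset α // S ⊆ E ∧ S.card ≤ r} ℝ :=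
  Matrix.of fun I J => (∑ e ∈ E, z e * y (insert e (I.1 ∪ J.1))) - y (I.1 ∪ J.1)

/-! The edge `e = (u, v)` is itself a path of length `1 ≤ 2k − 1`, so `z e = 1`; and `y'` does
not see `e`, since `Φ(e) = ∅` and `e ∉ E_Outer`. Hence the `e`-summand cancels `−y'_{I∪J}` and the
slack matrix is `∑_{f ≠ e} z f · (y'_{I∪J∪{f}})_{I,J}`, each term a principal submatrix of the
level-`(r+1)` moment matrix of `y'`. That moment matrix is `D M D`, where `M` is the moment matrix
of `y*` reindexed along `S ↦ Φ(S)` (which preserves unions and does not increase cardinality) and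
`D` is the `0/1` diagonal killing the sets that meet `E_Outer`. -/

open Matrix

section MomentMatrices

variable {α : Type*} [Fintype α] [DecidableEq α]

def shiftedMomentMatrixE (E : Finset α) (r : ℕ) (y : Finset α → ℝ) (a : α) :
    Matrix {S : Finset α // S ⊆ E ∧ S.card ≤ r} {S : Finset α // S ⊆ E ∧ S.card ≤ r} ℝ :=
  Matrix.of fun I J => y (insert a (I.1 ∪ J.1))

theorem shiftedMomentMatrixE_posSemidef {E : Finset α} {r : ℕ} {y : Finset α → ℝ}
    (hy : (momentMatrixE E (r + 1) y).PosSemidef) {a : α} (ha : a ∈ E) :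
    (shiftedMomentMatrixE E r y a).PosSemidef := by
  have hins (I : {S : Finset α // S ⊆ E ∧ S.card ≤ r}) :
      insert a I.1 ⊆ E ∧ (insert a I.1).card ≤ r + 1 :=
    ⟨Finset.insert_subset ha I.2.1, (Finset.card_insert_le _ _).trans (by omega)⟩
  convert hy.submatrix fun I => ⟨insert a I.1, hins I⟩ using 1
  ext I J
  simp [momentMatrixE, shiftedMomentMatrixE, Finset.insert_union, Finset.union_insert]

theorem slackMatrixE_eq_sum_shifted {E : Finset α} {r : ℕ} {y : Finset α → ℝ} {z : α → ℝ}
    {e : α} (he : e ∈ E) (hze : z e = 1) (hye : ∀ S, y (insert e S) = y S) :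
    slackMatrixE E r y z = ∑ f ∈ E.erase e, z f • shiftedMomentMatrixE E r y f := by
  ext I J
  simp only [slackMatrixE, shiftedMomentMatrixE, of_apply, Matrix.sum_apply, Matrix.smul_apply,
    smul_eq_mul]
  rw [← Finset.add_sum_erase _ _ he, hze, one_mul, hye, add_sub_cancel_left]

theorem slackMatrixE_posSemidef {E : Finset α} {r : ℕ} {y : Finset α → ℝ} {z : α → ℝ}
    (hy : (momentMatrixE E (r + 1) y).PosSemidef) (hz : ∀ f ∈ E, 0 ≤ z f)
    {e : α} (he : e ∈ E) (hze : z e = 1) (hye : ∀ S, y (insert e S) = y S) :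
    (slackMatrixE E r y z).PosSemidef := by
  rw [slackMatrixE_eq_sum_shifted he hze hye]
  exact posSemidef_sum _ fun f hf =>
    (shiftedMomentMatrixE_posSemidef hy (Finset.mem_of_mem_erase hf)).smul
      (hz f (Finset.mem_of_mem_erase hf))

theorem momentMatrixE_posSemidef_of_biUnion {β : Type*} [DecidableEq β] (E F : Finset α)
    (Φ : α → Finset β) (hΦ : ∀ a, (Φ a).card ≤ 1) {n m : ℕ} (hnm : n ≤ m)
    {y : Finset β → ℝ}
    (hy : (Matrix.of fun P Q : {S : Finset β // S.card ≤ m} => y (P.1 ∪ Q.1)).PosSemidef) :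
    (momentMatrixE E n fun S => if (S ∩ F).Nonempty then 0 else y (S.biUnion Φ)).PosSemidef := by
  have hcard (S : {S : Finset α // S ⊆ E ∧ S.card ≤ n}) : (S.1.biUnion Φ).card ≤ m :=
    calc (S.1.biUnion Φ).card ≤ S.1.card * 1 :=
          Finset.card_biUnion_le_card_mul _ _ _ fun a _ => hΦ a
      _ ≤ m := by simpa using S.2.2.trans hnm
  let mask : {S : Finset α // S ⊆ E ∧ S.card ≤ n} → ℝ :=
    fun S => if (S.1 ∩ F).Nonempty then 0 else 1
  convert (hy.submatrix fun S => ⟨S.1.biUnion Φ, hcard S⟩).mul_mul_conjTranspose_same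
    (diagonal mask) using 1
  ext S T
  simp only [momentMatrixE, of_apply, diagonal_conjTranspose, diagonal_mul, mul_diagonal,
    submatrix_apply, Finset.union_biUnion, Finset.union_inter_distrib_right,
    Finset.union_nonempty, mask]
  split_ifs <;> simp_all

end MomentMatrices

theorem isDirPath_singleton {V : Type*} [DecidableEq V] {E : Finset (V × V)} {u v : V}
    (huv : (u, v) ∈ E) (hne : u ≠ v) : IsDirPath E u v [(u, v)] :=
  ⟨List.cons_ne_nil _ _, by simpa using huv, rfl, rfl, List.isChain_singleton _, by simp [hne]⟩

theorem InZ.apply_eq_one {V : Type*} [DecidableEq V] {E : Finset (V × V)} {t : ℕ} {u v : V}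
    {z : V × V → ℝ} (hz : InZ E t u v z) (huv : (u, v) ∈ E) (hne : u ≠ v) (ht : 1 ≤ t) :
    z (u, v) = 1 :=
  le_antisymm (hz.1 _ huv).2 (by simpa using hz.2 _ (isDirPath_singleton huv hne) ht)

namespace Spanner

theorem mem_of_mem_pathEdges {V : Type*} {vs : List V} {a b : V} (h : (a, b) ∈ pathEdges vs) :
    a ∈ vs ∧ b ∈ vs :=
  have h' := List.of_mem_zip h
  ⟨h'.1, List.mem_of_mem_tail h'.2⟩

theorem ne_of_mem_pathEdges {V : Type*} :
    ∀ {vs : List V}, vs.Nodup → ∀ {a b : V}, (a, b) ∈ pathEdges vs → a ≠ b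
  | x :: y :: t, hvs, a, b, h => by
    rcases List.mem_cons.1 (show (a, b) ∈ (x, y) :: pathEdges (y :: t) from h) with h | h
    · obtain ⟨rfl, rfl⟩ := Prod.mk.inj h
      exact fun hxy => (List.nodup_cons.1 hvs).1 (hxy ▸ List.mem_cons_self)
    · exact ne_of_mem_pathEdges (List.nodup_cons.1 hvs).2 h

end Spanner

namespace SpV

variable {L R Sg : Type} {D T : ℕ}

def IsDup (v : SpV L R Sg D T) : Prop :=
  (∃ i l, v = cDup i l) ∨ ∃ j l, v = xDup j l

theorem not_isDup_cLab (i : L) (σ : Sg) : ¬(cLab i σ : SpV L R Sg D T).IsDup := by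
  simp [IsDup, cLab, cDup, xDup]

theorem not_isDup_xLab (j : R) (σ : Sg) : ¬(xLab j σ : SpV L R Sg D T).IsDup := by
  simp [IsDup, xLab, cDup, xDup]

theorem not_isDup_mid (i : L) (j : R) (σL σR : Sg) (t : Fin T) :
    ¬(mid i j σL σR t : SpV L R Sg D T).IsDup := by
  simp [IsDup, mid, cDup, xDup]

end SpV

namespace Spanner

variable {L R Sg : Type} [Fintype Sg] {k K : ℕ}

theorem Phi_card_le_one (e : Vt L R Sg k K × Vt L R Sg k K) : (Phi e).card ≤ 1 := by
  unfold Phi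
  split <;> simp

theorem Phi_eq_empty_s10 {a b : Vt L R Sg k K} (ha : ¬a.IsDup) (hb : ¬b.IsDup) :
    Phi (a, b) = ∅ := by
  unfold Phi
  split
  next _ _ _ _ h => exact absurd (Or.inl ⟨_, _, (Prod.mk.inj h).1⟩) ha
  next _ _ _ _ h => exact absurd (Or.inr ⟨_, _, (Prod.mk.inj h).2⟩) hb
  next => rfl

theorem midVerts_nodup (i : L) (j : R) (σL σR : Sg) : (midVerts k K i j σL σR).Nodup := by
  have hmid : Function.Injective fun t : Fin (2 * k - 4) =>
      (SpV.mid i j σL σR t : Vt L R Sg k K) := fun t t' h => by simpa [SpV.mid] using h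
  simp only [midVerts, List.nodup_append, List.nodup_cons, List.mem_map, List.mem_cons,
    List.not_mem_nil, or_false]
  refine ⟨⟨by simp [SpV.cLab, SpV.mid], (List.nodup_finRange _).map hmid⟩, by simp, ?_⟩
  rintro _ (rfl | ⟨t, _, rfl⟩) _ rfl <;> simp [SpV.cLab, SpV.mid, SpV.xLab]

theorem not_isDup_of_mem_midVerts {i : L} {j : R} {σL σR : Sg} {v : Vt L R Sg k K}
    (hv : v ∈ midVerts k K i j σL σR) : ¬v.IsDup := by
  simp only [midVerts, List.mem_append, List.mem_cons, List.mem_map, List.not_mem_nil,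
    or_false] at hv
  rcases hv with (rfl | ⟨t, _, rfl⟩) | rfl
  · exact SpV.not_isDup_cLab _ _
  · exact SpV.not_isDup_mid _ _ _ _ _
  · exact SpV.not_isDup_xLab _ _

variable [Fintype L] [Fintype R] [DecidableEq L] [DecidableEq R] [DecidableEq Sg]

theorem not_mem_EOuter {Eproj : Finset (L × R)} {a b : Vt L R Sg k K} (ha : ¬a.IsDup) :
    (a, b) ∉ EOuter Sg Eproj k K := by
  simp only [EOuter, Finset.mem_image, Prod.mk.injEq, not_exists, not_and]
  exact fun p _ hp _ => ha (Or.inl ⟨_, _, hp.symm⟩)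

theorem not_isDup_and_ne_of_mem_inner {Eproj : Finset (L × R)} {π : L → R → Sg → Sg} {σ0 : Sg}
    {a b : Vt L R Sg k K}
    (h : (a, b) ∈ ELStars L R σ0 k K ∪ EMedges Eproj π k K ∪ ERStars L R σ0 k K) :
    ¬a.IsDup ∧ ¬b.IsDup ∧ a ≠ b := by
  simp only [Finset.mem_union, ELStars, ERStars, EMedges, Finset.mem_image, Finset.mem_filter,
    Finset.mem_univ, true_and, Finset.mem_biUnion, List.mem_toFinset, Prod.mk.injEq] at h
  rcases h with ((⟨⟨_, _⟩, hp, rfl, rfl⟩ | ⟨⟨_, _⟩, hp, rfl, rfl⟩) | ⟨e, -, σL, he⟩) |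
      (⟨⟨_, _⟩, hp, rfl, rfl⟩ | ⟨⟨_, _⟩, hp, rfl, rfl⟩)
  case inr.inl | inr.inr =>
    exact ⟨SpV.not_isDup_xLab _ _, SpV.not_isDup_xLab _ _, by simpa [SpV.xLab, eq_comm] using hp⟩
  case inl.inr =>
    have hv := mem_of_mem_pathEdges he
    exact ⟨not_isDup_of_mem_midVerts hv.1, not_isDup_of_mem_midVerts hv.2,
      ne_of_mem_pathEdges (midVerts_nodup _ _ _ _) he⟩
  all_goals
    exact ⟨SpV.not_isDup_cLab _ _, SpV.not_isDup_cLab _ _, by simpa [SpV.cLab, eq_comm] using hp⟩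

theorem yPrime_insert {Eproj : Finset (L × R)} {ystar : Finset ((L ⊕ R) × Sg) → ℝ}
    {e : Vt L R Sg k K × Vt L R Sg k K} (he : e ∉ EOuter Sg Eproj k K) (hΦ : Phi e = ∅)
    (S : Finset (Vt L R Sg k K × Vt L R Sg k K)) :
    yPrime Eproj k K ystar (insert e S) = yPrime Eproj k K ystar S := by
  rw [yPrime, yPrime, Finset.insert_inter_of_notMem he, Finset.biUnion_insert, hΦ,
    Finset.empty_union]

theorem momentMatrixE_yPrime_posSemidef (Eproj : Finset (L × R))
    (E : Finset (Vt L R Sg k K × Vt L R Sg k K)) {r : ℕ} {ystar : Finset ((L ⊕ R) × Sg) → ℝ}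
    (hfeas : ProjFeasible (r + 2) ystar) :
    (momentMatrixE E (r + 1) (yPrime (Sg := Sg) Eproj k K ystar)).PosSemidef :=
  momentMatrixE_posSemidef_of_biUnion E _ Phi Phi_card_le_one (Nat.le_succ _) hfeas.2.1

end Spanner

theorem directed_spanner_slack_psd_integral_edges_general
    {L R Sg : Type} [Fintype L] [Fintype R] [Fintype Sg]
    [DecidableEq L] [DecidableEq R] [DecidableEq Sg]
    (Eproj : Finset (L × R)) (π : L → R → Sg → Sg) (σ0 : Sg) (k K : ℕ)
    (hk : 2 ≤ k)
    (r : ℕ) (ystar : Finset ((L ⊕ R) × Sg) → ℝ)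
    (hfeas : ProjFeasible (r + 2) ystar) :
    ∀ e ∈ Spanner.ELStars L R σ0 k K ∪ Spanner.EMedges Eproj π k K ∪
        Spanner.ERStars L R σ0 k K,
      ∀ z : Spanner.Vt L R Sg k K × Spanner.Vt L R Sg k K → ℝ,
        InZ (Spanner.Edges Eproj π σ0 k K) (2 * k - 1) e.1 e.2 z →
        (slackMatrixE (Spanner.Edges Eproj π σ0 k K) r
          (Spanner.yPrime Eproj k K ystar) z).PosSemidef := by
  rintro ⟨u, v⟩ he z hz
  obtain ⟨hu, hv, hne⟩ := Spanner.not_isDup_and_ne_of_mem_inner he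
  have hE : (u, v) ∈ Spanner.Edges Eproj π σ0 k K := by
    simp only [Spanner.Edges, Finset.mem_union] at he ⊢
    tauto
  exact slackMatrixE_posSemidef (Spanner.momentMatrixE_yPrime_posSemidef Eproj _ hfeas)
    (fun f hf => (hz.1 f hf).1) hE (hz.apply_eq_one hE hne (by omega))
    (Spanner.yPrime_insert (Spanner.not_mem_EOuter hu) (Spanner.Phi_eq_empty_s10 hu hv))

/-- Theorem `slack_ye=1`.  For the directed spanner instance `G = (V,E)`
built (with parameters `k ≥ 2`, `K ≥ 1`) from a projection games instance in which every left
vertex has degree exactly `K`, and the fractional solution `y'` built from a feasible solution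
`y*` of `SDP_Proj^{r+2}`: for every edge `(u,v) ∈ E_LStars ∪ E_M ∪ E_RStars` and every
`z ∈ Z^{u,v}` (with respect to stretch `2k−1`), the slack moment matrix
`(∑_{e∈E} z e · y'_{I∪J∪{e}} − y'_{I∪J})_{I,J ⊆ E, |I|,|J| ≤ r}` is positive semidefinite. -/
theorem directed_spanner_slack_psd_integral_edges
    {L R Sg : Type} [Fintype L] [Fintype R] [Fintype Sg]
    [DecidableEq L] [DecidableEq R] [DecidableEq Sg]
    (Eproj : Finset (L × R)) (π : L → R → Sg → Sg) (σ0 : Sg) (k K : ℕ)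
    (hk : 2 ≤ k) (hK : 1 ≤ K)
    (hdeg : ∀ i : L, (Eproj.filter fun e => e.1 = i).card = K)
    (r : ℕ) (ystar : Finset ((L ⊕ R) × Sg) → ℝ)
    (hfeas : ProjFeasible (r + 2) ystar) :
    ∀ e ∈ Spanner.ELStars L R σ0 k K ∪ Spanner.EMedges Eproj π k K ∪
        Spanner.ERStars L R σ0 k K,
      ∀ z : Spanner.Vt L R Sg k K × Spanner.Vt L R Sg k K → ℝ,
        InZ (Spanner.Edges Eproj π σ0 k K) (2 * k - 1) e.1 e.2 z →
        (slackMatrixE (Spanner.Edges Eproj π σ0 k K) r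
          (Spanner.yPrime Eproj k K ystar) z).PosSemidef :=
  directed_spanner_slack_psd_integral_edges_general Eproj π σ0 k K hk r ystar hfeas
end

section
/- Let G = (V,E) be the directed spanner instance built from a projection games instance in which every vertex of L has degree exactly K ≥ 1, with parameter k ≥ 2, let y* be a feasible solution to SDP_Proj^{r+2} (r ≥ 0), and let y' be built from y*. Then for every edge (u,v) ∈ E_L ∪ E_R and every z ∈ Z^{u,v} with respect to stretch t = 2k−1, the slack moment matrix with (I,J) entry ∑_{e∈E} z(e)·y'_{I∪J∪{e}} − y'_{I∪J}, indexed by subsets I, J ⊆ E with |I|, |J| ≤ r, is positive semidefinite. -/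
open Finset

/-!
Write the slack matrix as `∑_f z f • Y_f - Y_∅` with `Y_f = (y'_{I ∪ J ∪ {f}})_{I,J}`. Each `Y_f`
is a weighted principal submatrix of the moment matrix of `y*` (the index sets `Φ(I ∪ {f})` have
at most `r + 1` elements), hence positive semidefinite. For the edge `(c_i^l, c_{i,σ})` the
marginal constraint of `y*` at `c_i` splits `Y_∅ = ∑_s Y_{(c_i^l, c_{i,s})}`, and every star edge
`f` has `Φ f = ∅`, so `Y_f = Y_∅`. For each label `s` some path of at most `3 ≤ 2k - 1` edges
runs from `c_i^l` through `c_{i,s}` and the star to `c_{i,σ}`, so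
`z (c_i^l, c_{i,s}) + z(E_LStars) ≥ 1`. Therefore the slack matrix is a nonnegative combination
of the `Y_f`. Edges of `E_R` are handled symmetrically.
-/

namespace Matrix

theorem PosSemidef.weighted_submatrix {ι κ : Type*} [Fintype κ] [DecidableEq κ]
    {A : Matrix ι ι ℝ} (hA : A.PosSemidef) (f : κ → ι) (w : κ → ℝ) :
    (Matrix.of fun I J => w I * w J * A (f I) (f J)).PosSemidef := by
  have h : (Matrix.of fun I J => w I * w J * A (f I) (f J))
      = diagonal w * A.submatrix f f * (diagonal w)ᴴ := by
    ext I J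
    simp [mul_diagonal, diagonal_mul]
    ring
  rw [h]
  exact (hA.submatrix f).mul_mul_conjTranspose_same _

theorem posSemidef_sum_smul_sub_of_cut {ι α n : Type*} [Fintype ι] [DecidableEq α]
    {E B : Finset α} {d : ι → α} {z : α → ℝ} {Y : α → Matrix n n ℝ}
    (hd : Function.Injective d) (hdE : ∀ s, d s ∈ E) (hdB : ∀ s, d s ∉ B) (hBE : B ⊆ E)
    (hY : ∀ f ∈ E, (Y f).PosSemidef) (hYB : ∀ f ∈ B, Y f = ∑ s, Y (d s))
    (hz : ∀ f ∈ E, 0 ≤ z f) (hcut : ∀ s, 1 ≤ z (d s) + ∑ f ∈ B, z f) :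
    (∑ f ∈ E, z f • Y f - ∑ s, Y (d s)).PosSemidef := by
  set D := Finset.univ.map ⟨d, hd⟩
  have hDB : Disjoint D B := Finset.disjoint_left.2 fun f hf => by
    obtain ⟨s, -, rfl⟩ := Finset.mem_map.1 hf
    exact hdB s
  have hDBE : D ∪ B ⊆ E := Finset.union_subset (fun f hf => by
    obtain ⟨s, -, rfl⟩ := Finset.mem_map.1 hf
    exact hdE s) hBE
  have hBsum : ∑ f ∈ B, z f • Y f = (∑ f ∈ B, z f) • ∑ s, Y (d s) := by
    rw [Finset.sum_smul]
    exact Finset.sum_congr rfl fun f hf => by rw [hYB f hf]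
  have hsplit : ∑ f ∈ E, z f • Y f - ∑ s, Y (d s) = ∑ f ∈ E \ (D ∪ B), z f • Y f +
      ∑ s, (z (d s) + ∑ f ∈ B, z f - 1) • Y (d s) := by
    rw [← Finset.sum_sdiff hDBE, Finset.sum_union hDB, Finset.sum_map, hBsum]
    simp only [Function.Embedding.coeFn_mk, sub_smul, add_smul, one_smul,
      Finset.sum_sub_distrib, Finset.sum_add_distrib, ← Finset.smul_sum]
    abel
  rw [hsplit]
  refine (posSemidef_sum _ fun f hf => ?_).add (posSemidef_sum _ fun s _ => ?_)
  · have hfE := (Finset.mem_sdiff.1 hf).1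
    exact (hY f hfE).smul (hz f hfE)
  · exact (hY _ (hdE s)).smul (sub_nonneg.2 (hcut s))

end Matrix

section StarCut

variable {V Sg : Type*} [DecidableEq V] {E B : Finset (V × V)} {t : ℕ} {z : V × V → ℝ}

namespace InZ

variable {u v : V}

theorem one_le_of_edge (hz : InZ E t u v z) (ht : 1 ≤ t) (h : (u, v) ∈ E) (huv : u ≠ v) :
    1 ≤ z (u, v) := by
  simpa using hz.2 [(u, v)]
    ⟨by simp, by simp [h], rfl, rfl, List.isChain_singleton _, by simp [huv]⟩ (by simpa using ht)

theorem one_le_add_of_path₂ {w : V} (hz : InZ E t u v z) (ht : 2 ≤ t) (h₁ : (u, w) ∈ E)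
    (h₂ : (w, v) ∈ E) (hnd : [u, w, v].Nodup) : 1 ≤ z (u, w) + z (w, v) := by
  simpa using hz.2 [(u, w), (w, v)]
    ⟨by simp, by simp [h₁, h₂], rfl, rfl, .cons_cons rfl (.singleton _), hnd⟩ (by simpa using ht)

theorem one_le_add_add_of_path₃ {w₁ w₂ : V} (hz : InZ E t u v z) (ht : 3 ≤ t)
    (h₁ : (u, w₁) ∈ E) (h₂ : (w₁, w₂) ∈ E) (h₃ : (w₂, v) ∈ E) (hnd : [u, w₁, w₂, v].Nodup) :
    1 ≤ z (u, w₁) + z (w₁, w₂) + z (w₂, v) := by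
  have h := hz.2 [(u, w₁), (w₁, w₂), (w₂, v)]
    ⟨by simp, by simp [h₁, h₂, h₃], rfl, rfl, .cons_cons rfl (.cons_cons rfl (.singleton _)), hnd⟩
    (by simpa using ht)
  simpa [add_assoc] using h

variable {lab : Sg → V} {σ0 σ : Sg}

/- For every label `s` there is a path of at most three edges from `u` to `lab σ` that starts
with `(u, lab s)` and continues inside the star centred at `lab σ0`. -/
theorem one_le_add_sum_of_outStar (hz : InZ E t u (lab σ) z) (ht : 3 ≤ t)
    (hlab : Function.Injective lab) (hu : ∀ s, u ≠ lab s) (hBE : B ⊆ E)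
    (hout : ∀ s, (u, lab s) ∈ E)
    (hstar : ∀ s, s ≠ σ0 → (lab σ0, lab s) ∈ B ∧ (lab s, lab σ0) ∈ B) (s : Sg) :
    1 ≤ z (u, lab s) + ∑ f ∈ B, z f := by
  have hzB : ∀ f ∈ B, 0 ≤ z f := fun f hf => (hz.1 f (hBE hf)).1
  have hne : ∀ {a b}, a ≠ b → lab a ≠ lab b := hlab.ne
  rcases eq_or_ne s σ with rfl | hsσ
  · linarith [hz.one_le_of_edge (by omega) (hout s) (hu s), Finset.sum_nonneg hzB]
  rcases eq_or_ne s σ0 with rfl | hs0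
  · have hB := (hstar σ hsσ.symm).1
    linarith [hz.one_le_add_of_path₂ (by omega) (hout s) (hBE hB) (by simp [hu, hne hsσ]),
      Finset.single_le_sum hzB hB]
  rcases eq_or_ne σ σ0 with rfl | hσ0
  · have hB := (hstar s hs0).2
    linarith [hz.one_le_add_of_path₂ (by omega) (hout s) (hBE hB) (by simp [hu, hne hsσ]),
      Finset.single_le_sum hzB hB]
  · have hB₁ := (hstar s hs0).2
    have hB₂ := (hstar σ hσ0).1
    have hB₁₂ : (lab s, lab σ0) ≠ (lab σ0, lab σ) := by simp [hne hs0]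
    linarith [hz.one_le_add_add_of_path₃ ht (hout s) (hBE hB₁) (hBE hB₂)
      (by simp [hu, hne hsσ, hne hs0, hne hσ0.symm]), Finset.add_le_sum hzB hB₁ hB₂ hB₁₂]

theorem one_le_add_sum_of_inStar (hz : InZ E t (lab σ) u z) (ht : 3 ≤ t)
    (hlab : Function.Injective lab) (hu : ∀ s, u ≠ lab s) (hBE : B ⊆ E)
    (hin : ∀ s, (lab s, u) ∈ E)
    (hstar : ∀ s, s ≠ σ0 → (lab σ0, lab s) ∈ B ∧ (lab s, lab σ0) ∈ B) (s : Sg) :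
    1 ≤ z (lab s, u) + ∑ f ∈ B, z f := by
  have hzB : ∀ f ∈ B, 0 ≤ z f := fun f hf => (hz.1 f (hBE hf)).1
  have hne : ∀ {a b}, a ≠ b → lab a ≠ lab b := hlab.ne
  rcases eq_or_ne s σ with rfl | hsσ
  · linarith [hz.one_le_of_edge (by omega) (hin s) (hu s).symm, Finset.sum_nonneg hzB]
  rcases eq_or_ne s σ0 with rfl | hs0
  · have hB := (hstar σ hsσ.symm).2
    linarith [hz.one_le_add_of_path₂ (by omega) (hBE hB) (hin s)
      (by simp [(hu _).symm, hne hsσ.symm]), Finset.single_le_sum hzB hB]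
  rcases eq_or_ne σ σ0 with rfl | hσ0
  · have hB := (hstar s hs0).1
    linarith [hz.one_le_add_of_path₂ (by omega) (hBE hB) (hin s)
      (by simp [(hu _).symm, hne hsσ.symm]), Finset.single_le_sum hzB hB]
  · have hB₁ := (hstar σ hσ0).2
    have hB₂ := (hstar s hs0).1
    have hB₁₂ : (lab σ, lab σ0) ≠ (lab σ0, lab s) := by simp [hne hσ0]
    linarith [hz.one_le_add_add_of_path₃ ht (hBE hB₁) (hBE hB₂) (hin s)
      (by simp [(hu _).symm, hne hsσ.symm, hne hs0.symm, hne hσ0]),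
      Finset.add_le_sum hzB hB₁ hB₂ hB₁₂]

end InZ

end StarCut

namespace Spanner

theorem card_Phi_le_one {L R Sg : Type} [Fintype Sg] {k K : ℕ}
    (e : Vt L R Sg k K × Vt L R Sg k K) : (Phi e).card ≤ 1 := by
  obtain ⟨u | u | u | u | u, v | v | v | v | v⟩ := e <;> simp [Phi]

variable {L R Sg : Type} [Fintype Sg] [DecidableEq L] [DecidableEq R] [DecidableEq Sg] {k K : ℕ}

theorem card_biUnion_Phi_le (S : Finset (Vt L R Sg k K × Vt L R Sg k K)) :
    (S.biUnion Phi).card ≤ S.card :=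
  (S.card_biUnion_le_card_mul Phi 1 fun e _ => card_Phi_le_one e).trans_eq (mul_one _)

variable [Fintype L] [Fintype R] {m r : ℕ} {Eproj : Finset (L × R)}
  {ystar : Finset ((L ⊕ R) × Sg) → ℝ} {π : L → R → Sg → Sg} {σ0 : Sg}

variable (Eproj) in
def outerFreeInd (S : Finset (Vt L R Sg k K × Vt L R Sg k K)) : ℝ :=
  if (S ∩ EOuter Sg Eproj k K).Nonempty then 0 else 1

theorem yPrime_union (S T : Finset (Vt L R Sg k K × Vt L R Sg k K)) :
    yPrime Eproj k K ystar (S ∪ T) =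
      outerFreeInd Eproj S * outerFreeInd Eproj T * ystar (S.biUnion Phi ∪ T.biUnion Phi) := by
  simp only [yPrime, outerFreeInd, Finset.union_inter_distrib_right, Finset.union_nonempty,
    Finset.union_biUnion]
  split_ifs <;> simp_all

theorem posSemidef_yPrime_union (hfeas : ProjFeasible m ystar) {ι : Type*} [Fintype ι]
    [DecidableEq ι] (g : ι → Finset (Vt L R Sg k K × Vt L R Sg k K))
    (hg : ∀ I, (g I).card ≤ m) :
    (Matrix.of fun I J => yPrime Eproj k K ystar (g I ∪ g J)).PosSemidef := by
  simp only [yPrime_union]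
  exact hfeas.2.1.weighted_submatrix
    (fun I => ⟨(g I).biUnion Phi, (card_biUnion_Phi_le _).trans (hg I)⟩)
    (fun I => outerFreeInd Eproj (g I))

theorem yPrime_insert_of_Phi_eq_empty {f : Vt L R Sg k K × Vt L R Sg k K}
    (hf : f ∉ EOuter Sg Eproj k K) (hΦ : Phi f = ∅) (S : Finset (Vt L R Sg k K × Vt L R Sg k K)) :
    yPrime Eproj k K ystar (insert f S) = yPrime Eproj k K ystar S := by
  simp only [yPrime, Finset.insert_inter_of_notMem hf, Finset.biUnion_insert, hΦ,
    Finset.empty_union]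

theorem sum_yPrime_insert (hfeas : ProjFeasible m ystar) {w : L ⊕ R}
    {d : Sg → Vt L R Sg k K × Vt L R Sg k K}
    (hd : ∀ s, d s ∉ EOuter Sg Eproj k K ∧ Phi (d s) = {(w, s)})
    {I J : Finset (Vt L R Sg k K × Vt L R Sg k K)} (hI : I.card ≤ m) (hJ : J.card ≤ m) :
    ∑ s, yPrime Eproj k K ystar (insert (d s) (I ∪ J)) = yPrime Eproj k K ystar (I ∪ J) := by
  simp only [yPrime, Finset.insert_inter_of_notMem (hd _).1, Finset.biUnion_insert, (hd _).2]
  split_ifs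
  · simp
  · simp only [Finset.union_biUnion, Finset.union_comm {_}]
    exact hfeas.2.2 w _ _ ((card_biUnion_Phi_le I).trans hI) ((card_biUnion_Phi_le J).trans hJ)

theorem slackMatrixE_posSemidef_of_cut (hfeas : ProjFeasible m ystar) (hr : r + 1 ≤ m)
    {E B : Finset (Vt L R Sg k K × Vt L R Sg k K)} {z : Vt L R Sg k K × Vt L R Sg k K → ℝ}
    (hz : ∀ f ∈ E, 0 ≤ z f) {w : L ⊕ R} {d : Sg → Vt L R Sg k K × Vt L R Sg k K}
    (hdE : ∀ s, d s ∈ E) (hd : ∀ s, d s ∉ EOuter Sg Eproj k K ∧ Phi (d s) = {(w, s)})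
    (hBE : B ⊆ E) (hB : ∀ f ∈ B, f ∉ EOuter Sg Eproj k K ∧ Phi f = ∅)
    (hcut : ∀ s, 1 ≤ z (d s) + ∑ f ∈ B, z f) :
    (slackMatrixE E r (yPrime Eproj k K ystar) z).PosSemidef := by
  set Y : Vt L R Sg k K × Vt L R Sg k K →
      Matrix {S // S ⊆ E ∧ S.card ≤ r} {S // S ⊆ E ∧ S.card ≤ r} ℝ :=
    fun f => Matrix.of fun I J => yPrime Eproj k K ystar (insert f (I.1 ∪ J.1))
  have hmarg : ∑ s, Y (d s) = momentMatrixE E r (yPrime Eproj k K ystar) := by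
    ext I J
    rw [Matrix.sum_apply]
    exact sum_yPrime_insert hfeas hd (I.2.2.trans (by omega)) (J.2.2.trans (by omega))
  have hslack : slackMatrixE E r (yPrime Eproj k K ystar) z =
      ∑ f ∈ E, z f • Y f - ∑ s, Y (d s) := by
    ext I J
    simp [hmarg, slackMatrixE, momentMatrixE, Matrix.sum_apply, Y]
  rw [hslack]
  refine Matrix.posSemidef_sum_smul_sub_of_cut ?_ hdE ?_ hBE ?_ ?_ hz hcut
  · intro s t hst
    simpa using (hd s).2.symm.trans ((congrArg Phi hst).trans (hd t).2)
  · intro s hs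
    simpa [(hd s).2] using (hB _ hs).2
  · intro f _
    simp only [Y, Finset.insert_union_distrib]
    exact posSemidef_yPrime_union hfeas (fun I : {S // S ⊆ E ∧ S.card ≤ r} => insert f I.1)
      fun I => (Finset.card_insert_le _ _).trans (by have := I.2.2; omega)
  · intro f hf
    rw [hmarg]
    ext I J
    exact yPrime_insert_of_Phi_eq_empty (hB f hf).1 (hB f hf).2 _

theorem ELedges_subset_Edges : ELedges L R Sg k K ⊆ Edges Eproj π σ0 k K := by
  intro f hf; simp only [Edges, Finset.mem_union]; tauto

theorem ERedges_subset_Edges : ERedges L R Sg k K ⊆ Edges Eproj π σ0 k K := by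
  intro f hf; simp only [Edges, Finset.mem_union]; tauto

theorem ELStars_subset_Edges : ELStars L R σ0 k K ⊆ Edges Eproj π σ0 k K := by
  intro f hf; simp only [Edges, Finset.mem_union]; tauto

theorem ERStars_subset_Edges : ERStars L R σ0 k K ⊆ Edges Eproj π σ0 k K := by
  intro f hf; simp only [Edges, Finset.mem_union]; tauto

theorem cLab_mem_ELStars (i : L) {s : Sg} (hs : s ≠ σ0) :
    (SpV.cLab i σ0, SpV.cLab i s) ∈ ELStars L R σ0 k K ∧
      (SpV.cLab i s, SpV.cLab i σ0) ∈ ELStars L R σ0 k K := by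
  simp only [ELStars]
  exact ⟨Finset.mem_union_left _ (Finset.mem_image.2 ⟨(i, s), by simpa using hs, rfl⟩),
    Finset.mem_union_right _ (Finset.mem_image.2 ⟨(i, s), by simpa using hs, rfl⟩)⟩

theorem xLab_mem_ERStars (j : R) {s : Sg} (hs : s ≠ σ0) :
    (SpV.xLab j σ0, SpV.xLab j s) ∈ ERStars L R σ0 k K ∧
      (SpV.xLab j s, SpV.xLab j σ0) ∈ ERStars L R σ0 k K := by
  simp only [ERStars]
  exact ⟨Finset.mem_union_left _ (Finset.mem_image.2 ⟨(j, s), by simpa using hs, rfl⟩),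
    Finset.mem_union_right _ (Finset.mem_image.2 ⟨(j, s), by simpa using hs, rfl⟩)⟩

theorem ELStars_spec :
    ∀ f ∈ ELStars L R σ0 k K, f ∉ EOuter Sg Eproj k K ∧ Phi f = ∅ := by
  simp only [ELStars, Finset.mem_union, Finset.mem_image]
  rintro _ (⟨⟨i, s⟩, -, rfl⟩ | ⟨⟨i, s⟩, -, rfl⟩) <;>
    simp [EOuter, SpV.cLab, SpV.cDup, SpV.xDup, Phi]

theorem ERStars_spec :
    ∀ f ∈ ERStars L R σ0 k K, f ∉ EOuter Sg Eproj k K ∧ Phi f = ∅ := by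
  simp only [ERStars, Finset.mem_union, Finset.mem_image]
  rintro _ (⟨⟨j, s⟩, -, rfl⟩ | ⟨⟨j, s⟩, -, rfl⟩) <;>
    simp [EOuter, SpV.xLab, SpV.cDup, SpV.xDup, Phi]

theorem cDup_cLab_spec (i : L) (l : Fin (numDup Sg k K)) (s : Sg) :
    ((SpV.cDup i l : Vt L R Sg k K), SpV.cLab i s) ∉ EOuter Sg Eproj k K ∧
      Phi ((SpV.cDup i l : Vt L R Sg k K), SpV.cLab i s) = {(Sum.inl i, s)} := by
  simp [EOuter, SpV.cDup, SpV.cLab, SpV.xDup, Phi]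

theorem xLab_xDup_spec (j : R) (l : Fin (numDup Sg k K)) (s : Sg) :
    ((SpV.xLab j s : Vt L R Sg k K), SpV.xDup j l) ∉ EOuter Sg Eproj k K ∧
      Phi ((SpV.xLab j s : Vt L R Sg k K), SpV.xDup j l) = {(Sum.inr j, s)} := by
  simp [EOuter, SpV.cDup, SpV.xLab, SpV.xDup, Phi]

end Spanner

theorem directed_spanner_slack_psd_connection_edges_general
    {L R Sg : Type} [Fintype L] [Fintype R] [Fintype Sg]
    [DecidableEq L] [DecidableEq R] [DecidableEq Sg]
    (Eproj : Finset (L × R)) (π : L → R → Sg → Sg) (σ0 : Sg) (k K : ℕ)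
    (hk : 2 ≤ k)
    (r : ℕ) (ystar : Finset ((L ⊕ R) × Sg) → ℝ)
    (hfeas : ProjFeasible (r + 2) ystar) :
    ∀ e ∈ Spanner.ELedges L R Sg k K ∪ Spanner.ERedges L R Sg k K,
      ∀ z : Spanner.Vt L R Sg k K × Spanner.Vt L R Sg k K → ℝ,
        InZ (Spanner.Edges Eproj π σ0 k K) (2 * k - 1) e.1 e.2 z →
        (slackMatrixE (Spanner.Edges Eproj π σ0 k K) r
          (Spanner.yPrime Eproj k K ystar) z).PosSemidef := by
  open Spanner in
  intro e he z hz
  have hz0 : ∀ f ∈ Edges Eproj π σ0 k K, 0 ≤ z f := fun f hf => (hz.1 f hf).1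
  have ht : 3 ≤ 2 * k - 1 := by omega
  rcases Finset.mem_union.1 he with heL | heR
  · obtain ⟨⟨i, l, σ⟩, -, rfl⟩ := Finset.mem_image.1 heL
    have hd : ∀ s, (SpV.cDup i l, SpV.cLab i s) ∈ Edges Eproj π σ0 k K := fun s =>
      ELedges_subset_Edges (Finset.mem_image_of_mem _ (Finset.mem_univ (i, l, s)))
    have hcut := InZ.one_le_add_sum_of_outStar (lab := SpV.cLab i) (σ := σ) hz ht
      (fun s t h => by simpa [SpV.cLab] using h) (fun s => by simp [SpV.cDup, SpV.cLab])
      ELStars_subset_Edges hd fun s hs => cLab_mem_ELStars i hs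
    exact slackMatrixE_posSemidef_of_cut hfeas (by omega) hz0 hd (cDup_cLab_spec i l)
      ELStars_subset_Edges ELStars_spec hcut
  · obtain ⟨⟨j, l, σ⟩, -, rfl⟩ := Finset.mem_image.1 heR
    have hd : ∀ s, (SpV.xLab j s, SpV.xDup j l) ∈ Edges Eproj π σ0 k K := fun s =>
      ERedges_subset_Edges (Finset.mem_image_of_mem _ (Finset.mem_univ (j, l, s)))
    have hcut := InZ.one_le_add_sum_of_inStar (lab := SpV.xLab j) (σ := σ) hz ht
      (fun s t h => by simpa [SpV.xLab] using h) (fun s => by simp [SpV.xDup, SpV.xLab])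
      ERStars_subset_Edges hd fun s hs => xLab_mem_ERStars j hs
    exact slackMatrixE_posSemidef_of_cut hfeas (by omega) hz0 hd (xLab_xDup_spec j l)
      ERStars_subset_Edges ERStars_spec hcut

/-- Theorem `slack:E_LE_R`.  For the directed spanner instance `G = (V,E)`
built (with parameters `k ≥ 2`, `K ≥ 1`) from a projection games instance in which every left
vertex has degree exactly `K`, and the fractional solution `y'` built from a feasible solution
`y*` of `SDP_Proj^{r+2}`: for every edge `(u,v) ∈ E_L ∪ E_R` and every `z ∈ Z^{u,v}` (with
respect to stretch `2k−1`), the slack moment matrix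
`(∑_{e∈E} z e · y'_{I∪J∪{e}} − y'_{I∪J})_{I,J ⊆ E, |I|,|J| ≤ r}` is positive semidefinite. -/
theorem directed_spanner_slack_psd_connection_edges
    {L R Sg : Type} [Fintype L] [Fintype R] [Fintype Sg]
    [DecidableEq L] [DecidableEq R] [DecidableEq Sg]
    (Eproj : Finset (L × R)) (π : L → R → Sg → Sg) (σ0 : Sg) (k K : ℕ)
    (hk : 2 ≤ k) (hK : 1 ≤ K)
    (hdeg : ∀ i : L, (Eproj.filter fun e => e.1 = i).card = K)
    (r : ℕ) (ystar : Finset ((L ⊕ R) × Sg) → ℝ)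
    (hfeas : ProjFeasible (r + 2) ystar) :
    ∀ e ∈ Spanner.ELedges L R Sg k K ∪ Spanner.ERedges L R Sg k K,
      ∀ z : Spanner.Vt L R Sg k K × Spanner.Vt L R Sg k K → ℝ,
        InZ (Spanner.Edges Eproj π σ0 k K) (2 * k - 1) e.1 e.2 z →
        (slackMatrixE (Spanner.Edges Eproj π σ0 k K) r
          (Spanner.yPrime Eproj k K ystar) z).PosSemidef :=
  directed_spanner_slack_psd_connection_edges_general Eproj π σ0 k K hk r ystar hfeas
end
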